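/- arXiv:2004.03628 — 8 statements merged into one kernel-verified Lean document; each statement's English description precedes it below -/
import Mathlib

section
/- For any Borel set E in R^d with finite Lebesgue measure, any exponent α in (0,d), and any point x in R^d, the Riesz potential v_E(x) = ∫_E |x−y|^{−α} dy satisfies v_E(x) ≤ ∫_{B_r} |y|^{−α} dy, where B_r is the ball centered at the origin with the same Lebesgue measure as E (i.e. r = (|E|/|B_1|)^{1/d}). -/
open MeasureTheory Set Metric

/-- For any Borel set `E ⊆ ℝᵈ` with finite Lebesgue measure, `0 < α < d`, and any `x`,
the Riesz potential `v_E(x) = ∫_E |x-y|^{-α} dy` is bounded by `∫_{B_r} |y|^{-α} dy`,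
where `B_r` is the ball centered at the origin with the same measure as `E`,
i.e. `r = (|E|/|B_1|)^{1/d}`. -/
theorem riesz_potential_le_ball_potential
    (d : ℕ) (hd : 0 < d) (α : ℝ) (hα : 0 < α) (hαd : α < d)
    (E : Set (EuclideanSpace ℝ (Fin d))) (hE : MeasurableSet E)
    (hEfin : volume E < ⊤)
    (x : EuclideanSpace ℝ (Fin d)) (r : ℝ)
    (hr : r = ((volume E).toReal /
        (volume (ball (0 : EuclideanSpace ℝ (Fin d)) 1)).toReal) ^ ((1 : ℝ) / d)) :
    (∫ y in E, ‖x - y‖ ^ (-α)) ≤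
      ∫ y in ball (0 : EuclideanSpace ℝ (Fin d)) r, ‖y‖ ^ (-α) := by
  have hαne : -α ≠ 0 := by linarith
  have hnegα : -α < 0 := by linarith
  have hr0 : 0 ≤ r := by
    rw [hr]
    exact Real.rpow_nonneg (div_nonneg ENNReal.toReal_nonneg ENNReal.toReal_nonneg) _
  haveI : Nontrivial (EuclideanSpace ℝ (Fin d)) :=
    Module.nontrivial_of_finrank_pos (R := ℝ)
      (by rw [finrank_euclideanSpace_fin]; exact hd)
  have hB1pos : (0 : ENNReal) < volume (ball (0 : EuclideanSpace ℝ (Fin d)) 1) :=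
    measure_ball_pos _ _ one_pos
  have hB1top : volume (ball (0 : EuclideanSpace ℝ (Fin d)) 1) ≠ ⊤ := measure_ball_lt_top.ne
  -- the ball of radius r has the same volume as E
  have hvol : volume (ball (0 : EuclideanSpace ℝ (Fin d)) r) = volume E := by
    rw [Measure.addHaar_ball _ _ hr0, finrank_euclideanSpace_fin]
    have hdne : (d : ℝ) ≠ 0 := Nat.cast_ne_zero.2 hd.ne'
    have hrd : r ^ d = (volume E).toReal /
        (volume (ball (0 : EuclideanSpace ℝ (Fin d)) 1)).toReal := by
      rw [hr, ← Real.rpow_natCast (_ ^ ((1 : ℝ) / d)) d,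
        ← Real.rpow_mul (div_nonneg ENNReal.toReal_nonneg ENNReal.toReal_nonneg),
        one_div, inv_mul_cancel₀ hdne, Real.rpow_one]
    rw [hrd, ENNReal.ofReal_div_of_pos (ENNReal.toReal_pos hB1pos.ne' hB1top),
      ENNReal.ofReal_toReal hEfin.ne, ENNReal.ofReal_toReal hB1top,
      ENNReal.div_mul_cancel hB1pos.ne' hB1top]
  -- measurability
  have hm1 : Measurable fun y : EuclideanSpace ℝ (Fin d) => ‖x - y‖ ^ (-α) := by fun_prop
  have hm2 : Measurable fun y : EuclideanSpace ℝ (Fin d) => ‖y‖ ^ (-α) := by fun_prop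
  -- description of superlevel sets
  have hset : ∀ (c : EuclideanSpace ℝ (Fin d)) (t : ℝ), 0 < t →
      {y : EuclideanSpace ℝ (Fin d) | t < ‖c - y‖ ^ (-α)}
        = ball c (t ^ (-α)⁻¹) \ {c} := by
    intro c t ht
    ext y
    by_cases hy : y = c
    · subst hy
      simp [Real.zero_rpow hαne, not_lt.2 ht.le]
    · have hu : 0 < ‖c - y‖ := by
        rw [norm_pos_iff, sub_ne_zero]
        exact fun h => hy h.symm
      simp only [mem_setOf_eq, mem_diff, mem_ball, mem_singleton_iff, hy, not_false_iff,
        and_true]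
      rw [dist_comm, dist_eq_norm]
      exact (Real.lt_rpow_inv_iff_of_neg hu ht hnegα).symm
  have hsetB : ∀ t : ℝ, 0 < t →
      {y : EuclideanSpace ℝ (Fin d) | t < ‖y‖ ^ (-α)}
        = ball (0 : EuclideanSpace ℝ (Fin d)) (t ^ (-α)⁻¹) \ {0} := by
    intro t ht
    have h := hset 0 t ht
    simpa [zero_sub, norm_neg] using h
  -- the volume of a ball with min radius is the min of volumes
  have hball_min : ∀ s₁ s₂ : ℝ,
      volume (ball (0 : EuclideanSpace ℝ (Fin d)) (min s₁ s₂))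
        = min (volume (ball (0 : EuclideanSpace ℝ (Fin d)) s₁))
          (volume (ball (0 : EuclideanSpace ℝ (Fin d)) s₂)) := by
    intro s₁ s₂
    rcases le_total s₁ s₂ with h | h
    · rw [min_eq_left h, min_eq_left (measure_mono (ball_subset_ball h))]
    · rw [min_eq_right h, min_eq_right (measure_mono (ball_subset_ball h))]
  -- key superlevel measure comparison
  have key : ∀ t ∈ Ioi (0 : ℝ),
      volume.restrict E {y : EuclideanSpace ℝ (Fin d) | t < ‖x - y‖ ^ (-α)}
        ≤ volume.restrict (ball (0 : EuclideanSpace ℝ (Fin d)) r)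
            {y : EuclideanSpace ℝ (Fin d) | t < ‖y‖ ^ (-α)} := by
    intro t ht
    rw [Measure.restrict_apply (measurableSet_lt measurable_const hm1),
      Measure.restrict_apply (measurableSet_lt measurable_const hm2)]
    rw [hset x t ht, hsetB t ht]
    set s : ℝ := t ^ (-α)⁻¹ with hs
    have h1 : volume ((ball x s \ {x}) ∩ E)
        ≤ volume (ball (0 : EuclideanSpace ℝ (Fin d)) (min r s)) := by
      rw [hball_min]
      refine le_min ?_ ?_
      · calc volume ((ball x s \ {x}) ∩ E) ≤ volume E := measure_mono inter_subset_right
          _ = volume (ball (0 : EuclideanSpace ℝ (Fin d)) r) := hvol.symm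
      · calc volume ((ball x s \ {x}) ∩ E) ≤ volume (ball x s) :=
              measure_mono (inter_subset_left.trans diff_subset)
          _ = volume (ball (0 : EuclideanSpace ℝ (Fin d)) s) :=
              Measure.addHaar_ball_center volume x s
    refine h1.trans ?_
    have h2 : ball (0 : EuclideanSpace ℝ (Fin d)) (min r s) \ {0}
        ⊆ (ball (0 : EuclideanSpace ℝ (Fin d)) s \ {0})
          ∩ ball (0 : EuclideanSpace ℝ (Fin d)) r := fun y hy =>
      ⟨⟨ball_subset_ball (min_le_right r s) hy.1, hy.2⟩,
        ball_subset_ball (min_le_left r s) hy.1⟩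
    calc volume (ball (0 : EuclideanSpace ℝ (Fin d)) (min r s))
        = volume (ball (0 : EuclideanSpace ℝ (Fin d)) (min r s) \ {0}) :=
          (measure_diff_null (measure_singleton _)).symm
      _ ≤ _ := measure_mono h2
  -- layer cake representations
  have nn1 : 0 ≤ᵐ[volume.restrict E] fun y : EuclideanSpace ℝ (Fin d) => ‖x - y‖ ^ (-α) :=
    Filter.Eventually.of_forall fun y => Real.rpow_nonneg (norm_nonneg _) _
  have nn2 : 0 ≤ᵐ[volume.restrict (ball (0 : EuclideanSpace ℝ (Fin d)) r)]
      fun y : EuclideanSpace ℝ (Fin d) => ‖y‖ ^ (-α) :=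
    Filter.Eventually.of_forall fun y => Real.rpow_nonneg (norm_nonneg _) _
  have L1 := lintegral_eq_lintegral_meas_lt (volume.restrict E) nn1 hm1.aemeasurable
  have L2 := lintegral_eq_lintegral_meas_lt
    (volume.restrict (ball (0 : EuclideanSpace ℝ (Fin d)) r)) nn2 hm2.aemeasurable
  -- antitonicity ⇒ measurability of level-measure functions
  have hg_anti : Antitone (fun t : ℝ =>
      volume.restrict (ball (0 : EuclideanSpace ℝ (Fin d)) r)
        {y : EuclideanSpace ℝ (Fin d) | t < ‖y‖ ^ (-α)}) := by
    intro t₁ t₂ h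
    exact measure_mono fun y hy => lt_of_le_of_lt h hy
  -- comparison of the lintegrals
  have hle : (∫⁻ y in E, ENNReal.ofReal (‖x - y‖ ^ (-α)))
      ≤ ∫⁻ y in ball (0 : EuclideanSpace ℝ (Fin d)) r, ENNReal.ofReal (‖y‖ ^ (-α)) := by
    rw [L1, L2]
    exact setLIntegral_mono hg_anti.measurable key
  -- finiteness of the right-hand side
  have hfin : (∫⁻ y in ball (0 : EuclideanSpace ℝ (Fin d)) r,
      ENNReal.ofReal (‖y‖ ^ (-α))) < ⊤ := by
    rw [L2]
    rw [← Ioc_union_Ioi_eq_Ioi (zero_le_one (α := ℝ)),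
      lintegral_union measurableSet_Ioi (Ioc_disjoint_Ioi le_rfl)]
    have part1 : (∫⁻ t in Ioc (0 : ℝ) 1,
        volume.restrict (ball (0 : EuclideanSpace ℝ (Fin d)) r)
          {y : EuclideanSpace ℝ (Fin d) | t < ‖y‖ ^ (-α)}) < ⊤ := by
      calc (∫⁻ t in Ioc (0 : ℝ) 1,
          volume.restrict (ball (0 : EuclideanSpace ℝ (Fin d)) r)
            {y : EuclideanSpace ℝ (Fin d) | t < ‖y‖ ^ (-α)})
          ≤ ∫⁻ _ in Ioc (0 : ℝ) 1, volume (ball (0 : EuclideanSpace ℝ (Fin d)) r) :=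
            setLIntegral_mono measurable_const fun t _ => by
              rw [Measure.restrict_apply (measurableSet_lt measurable_const hm2)]
              exact measure_mono inter_subset_right
        _ = volume (ball (0 : EuclideanSpace ℝ (Fin d)) r) * volume (Ioc (0 : ℝ) 1) :=
            setLIntegral_const _ _
        _ < ⊤ := by
            refine ENNReal.mul_lt_top measure_ball_lt_top ?_
            simp [Real.volume_Ioc]
    have hp : -((d : ℝ) / α) < -1 := by
      have : 1 < (d : ℝ) / α := (one_lt_div hα).2 hαd
      linarith
    have hexp : ∀ t : ℝ, 0 < t → (t ^ (-α)⁻¹) ^ d = t ^ (-((d : ℝ) / α)) := by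
      intro t ht
      rw [← Real.rpow_natCast (t ^ (-α)⁻¹) d, ← Real.rpow_mul ht.le]
      congr 1
      field_simp
    have part2 : (∫⁻ t in Ioi (1 : ℝ),
        volume.restrict (ball (0 : EuclideanSpace ℝ (Fin d)) r)
          {y : EuclideanSpace ℝ (Fin d) | t < ‖y‖ ^ (-α)}) < ⊤ := by
      have hmeas : Measurable fun t : ℝ => ENNReal.ofReal (t ^ (-((d : ℝ) / α)))
          * volume (ball (0 : EuclideanSpace ℝ (Fin d)) 1) :=
        (Measurable.ennreal_ofReal (by fun_prop)).mul_const _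
      have hb : ∀ t ∈ Ioi (1 : ℝ),
          volume.restrict (ball (0 : EuclideanSpace ℝ (Fin d)) r)
            {y : EuclideanSpace ℝ (Fin d) | t < ‖y‖ ^ (-α)}
          ≤ ENNReal.ofReal (t ^ (-((d : ℝ) / α)))
            * volume (ball (0 : EuclideanSpace ℝ (Fin d)) 1) := by
        intro t ht
        have ht0 : (0 : ℝ) < t := lt_trans zero_lt_one ht
        rw [Measure.restrict_apply (measurableSet_lt measurable_const hm2), hsetB t ht0]
        calc volume ((ball (0 : EuclideanSpace ℝ (Fin d)) (t ^ (-α)⁻¹) \ {0})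
              ∩ ball (0 : EuclideanSpace ℝ (Fin d)) r)
            ≤ volume (ball (0 : EuclideanSpace ℝ (Fin d)) (t ^ (-α)⁻¹)) :=
              measure_mono (inter_subset_left.trans diff_subset)
          _ = ENNReal.ofReal ((t ^ (-α)⁻¹) ^ d)
              * volume (ball (0 : EuclideanSpace ℝ (Fin d)) 1) := by
              rw [Measure.addHaar_ball _ _ (Real.rpow_nonneg ht0.le _),
                finrank_euclideanSpace_fin]
          _ = _ := by rw [hexp t ht0]
      calc (∫⁻ t in Ioi (1 : ℝ),
          volume.restrict (ball (0 : EuclideanSpace ℝ (Fin d)) r)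
            {y : EuclideanSpace ℝ (Fin d) | t < ‖y‖ ^ (-α)})
          ≤ ∫⁻ t in Ioi (1 : ℝ), ENNReal.ofReal (t ^ (-((d : ℝ) / α)))
              * volume (ball (0 : EuclideanSpace ℝ (Fin d)) 1) :=
            setLIntegral_mono hmeas hb
        _ = (∫⁻ t in Ioi (1 : ℝ), ENNReal.ofReal (t ^ (-((d : ℝ) / α))))
              * volume (ball (0 : EuclideanSpace ℝ (Fin d)) 1) :=
            lintegral_mul_const _ (Measurable.ennreal_ofReal (by fun_prop))
        _ < ⊤ := by
            refine ENNReal.mul_lt_top ?_ hB1top.lt_top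
            have hint : IntegrableOn (fun t : ℝ => t ^ (-((d : ℝ) / α))) (Ioi 1) :=
              integrableOn_Ioi_rpow_of_lt hp zero_lt_one
            have hfi := hint.2
            refine lt_of_le_of_lt ?_ hfi
            refine lintegral_mono fun t => ?_
            rw [Real.enorm_eq_ofReal_abs]
            exact ENNReal.ofReal_le_ofReal (le_abs_self _)
    exact ENNReal.add_lt_top.2 ⟨part1, part2⟩
  -- convert Bochner integrals to lower integrals
  have e1 : (∫ y in E, ‖x - y‖ ^ (-α))
      = (∫⁻ y in E, ENNReal.ofReal (‖x - y‖ ^ (-α))).toReal :=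
    integral_eq_lintegral_of_nonneg_ae nn1 hm1.aestronglyMeasurable
  have e2 : (∫ y in ball (0 : EuclideanSpace ℝ (Fin d)) r, ‖y‖ ^ (-α))
      = (∫⁻ y in ball (0 : EuclideanSpace ℝ (Fin d)) r,
          ENNReal.ofReal (‖y‖ ^ (-α))).toReal :=
    integral_eq_lintegral_of_nonneg_ae nn2 hm2.aestronglyMeasurable
  rw [e1, e2]
  exact ENNReal.toReal_mono hfin.ne hle
end

section
/- For any two Borel sets E, F in R^d with finite Lebesgue measure and 0 < α < d, the Riesz self-interaction energy V(E) := ∫_E ∫_E |x−y|^{−α} dx dy satisfies the Lipschitz-type estimate |V(E) − V(F)| ≤ c_{α,d}(|E|^{1−α/d} + |F|^{1−α/d}) · |E Δ F|, with c_{α,d} = d|B_1|^{α/d}/(d−α). -/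
open MeasureTheory Set Metric
open scoped symmDiff
open scoped ENNReal


lemma riesz_bathtub {d : ℕ} (hd : 0 < d) {α : ℝ} (hα : 0 < α) (hαd : α < d)
    (x : EuclideanSpace ℝ (Fin d)) (A : Set (EuclideanSpace ℝ (Fin d)))
    (hfin : volume A < ⊤) :
    ∫⁻ y in A, ENNReal.ofReal (‖x - y‖ ^ (-α)) ≤
      ENNReal.ofReal
        ((d * (volume (ball (0 : EuclideanSpace ℝ (Fin d)) 1)).toReal ^ (α / d) / (d - α)) *
          (volume A).toReal ^ (1 - α / d)) := by
  have hd' : (0:ℝ) < d := Nat.cast_pos.mpr hd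
  have hda : (0:ℝ) < (d:ℝ) - α := by linarith
  set b : ℝ := (volume (ball (0 : EuclideanSpace ℝ (Fin d)) 1)).toReal with hbdef
  have hb : 0 < b := ENNReal.toReal_pos (measure_ball_pos _ _ one_pos).ne' measure_ball_lt_top.ne
  rcases eq_or_ne (volume A) 0 with h0 | h0
  · rw [Measure.restrict_eq_zero.mpr h0, lintegral_zero_measure]
    exact zero_le
  set s : ℝ := (volume A).toReal with hsdef
  have hs0 : 0 < s := ENNReal.toReal_pos h0 hfin.ne
  set t0 : ℝ := (s / b) ^ (-(α / (d:ℝ))) with ht0def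
  have hsb : (0:ℝ) < s / b := div_pos hs0 hb
  have ht0 : 0 < t0 := Real.rpow_pos_of_pos hsb _
  rw [lintegral_eq_lintegral_meas_le _
      (ae_of_all _ fun y => Real.rpow_nonneg (norm_nonneg _) _)
      (by fun_prop : AEMeasurable (fun y : EuclideanSpace ℝ (Fin d) => ‖x - y‖ ^ (-α)) _)]
  set g : ℝ → ℝ≥0∞ :=
    fun t => (volume.restrict A) {y : EuclideanSpace ℝ (Fin d) | t ≤ ‖x - y‖ ^ (-α)} with hgdef
  have key1 : ∀ t : ℝ, g t ≤ volume A := fun t =>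
    (measure_mono (subset_univ _)).trans_eq (Measure.restrict_apply_univ _)
  have hc : -((d:ℝ)/α) < -1 := by
    rw [neg_lt_neg_iff]
    exact (one_lt_div hα).mpr hαd
  have key2 : ∀ t : ℝ, 0 < t →
      g t ≤ ENNReal.ofReal (t ^ (-((d:ℝ)/α))) * volume (ball (0 : EuclideanSpace ℝ (Fin d)) 1) := by
    intro t ht
    have hsub : {y : EuclideanSpace ℝ (Fin d) | t ≤ ‖x - y‖ ^ (-α)} ⊆
        closedBall x (t ^ (-α⁻¹)) := by
      intro y hy
      simp only [mem_setOf_eq] at hy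
      have hxy : 0 < ‖x - y‖ := by
        rcases (norm_nonneg (x - y)).lt_or_eq with h | h
        · exact h
        · exfalso
          rw [← h, Real.zero_rpow (neg_ne_zero.mpr hα.ne')] at hy
          exact absurd hy (not_le.mpr ht)
      rw [mem_closedBall, dist_eq_norm, norm_sub_rev]
      have h2 := Real.rpow_le_rpow_of_nonpos ht hy
        (neg_nonpos.mpr (inv_nonneg.mpr hα.le))
      rwa [← Real.rpow_mul hxy.le, neg_mul_neg, mul_inv_cancel₀ hα.ne', Real.rpow_one] at h2
    calc g t ≤ volume (closedBall x (t ^ (-α⁻¹))) :=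
          (measure_mono hsub).trans (Measure.restrict_apply_le _ _)
      _ = ENNReal.ofReal ((t ^ (-α⁻¹)) ^ (Module.finrank ℝ (EuclideanSpace ℝ (Fin d)))) *
            volume (ball (0 : EuclideanSpace ℝ (Fin d)) 1) :=
          Measure.addHaar_closedBall _ _ (Real.rpow_nonneg ht.le _)
      _ = ENNReal.ofReal (t ^ (-((d:ℝ)/α))) * volume (ball (0 : EuclideanSpace ℝ (Fin d)) 1) := by
          rw [finrank_euclideanSpace_fin, ← Real.rpow_natCast (t ^ (-α⁻¹)) d,
            ← Real.rpow_mul ht.le, show -α⁻¹ * (d:ℝ) = -((d:ℝ)/α) by ring]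
  calc ∫⁻ t in Ioi 0, g t
      ≤ ∫⁻ t in Ioc 0 t0 ∪ Ioi t0, g t := lintegral_mono_set Ioi_subset_Ioc_union_Ioi
    _ ≤ (∫⁻ t in Ioc 0 t0, g t) + ∫⁻ t in Ioi t0, g t := lintegral_union_le _ _ _
    _ ≤ ENNReal.ofReal s * ENNReal.ofReal t0 +
          ENNReal.ofReal (-t0 ^ (-((d:ℝ)/α) + 1) / (-((d:ℝ)/α) + 1)) *
            volume (ball (0 : EuclideanSpace ℝ (Fin d)) 1) := by
        gcongr
        · calc (∫⁻ t in Ioc 0 t0, g t) ≤ ∫⁻ _ in Ioc 0 t0, volume A :=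
              setLIntegral_mono' measurableSet_Ioc fun t _ => key1 t
            _ = volume A * ENNReal.ofReal t0 := by
              rw [setLIntegral_const, Real.volume_Ioc, sub_zero]
            _ = ENNReal.ofReal s * ENNReal.ofReal t0 := by
              rw [hsdef, ENNReal.ofReal_toReal hfin.ne]
        · calc (∫⁻ t in Ioi t0, g t)
              ≤ ∫⁻ t in Ioi t0, ENNReal.ofReal (t ^ (-((d:ℝ)/α))) *
                  volume (ball (0 : EuclideanSpace ℝ (Fin d)) 1) :=
                setLIntegral_mono' measurableSet_Ioi fun t htm => key2 t (ht0.trans htm)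
            _ = (∫⁻ t in Ioi t0, ENNReal.ofReal (t ^ (-((d:ℝ)/α)))) *
                  volume (ball (0 : EuclideanSpace ℝ (Fin d)) 1) :=
                lintegral_mul_const' _ _ measure_ball_lt_top.ne
            _ = ENNReal.ofReal (-t0 ^ (-((d:ℝ)/α) + 1) / (-((d:ℝ)/α) + 1)) *
                  volume (ball (0 : EuclideanSpace ℝ (Fin d)) 1) := by
                rw [← ofReal_integral_eq_lintegral_ofReal
                    (integrableOn_Ioi_rpow_of_lt hc ht0)
                    (by
                      filter_upwards [ae_restrict_mem measurableSet_Ioi] with t htm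
                      exact Real.rpow_nonneg (ht0.trans htm).le _),
                  integral_Ioi_rpow_of_lt hc ht0]
    _ ≤ ENNReal.ofReal ((d * b ^ (α / d) / (d - α)) * s ^ (1 - α / d)) := by
        have hp : -((d:ℝ)/α) + 1 ≠ 0 := by
          intro h
          have : (d:ℝ)/α = 1 := by linarith
          rw [div_eq_one_iff_eq hα.ne'] at this
          linarith
        have hterm2 : 0 ≤ -t0 ^ (-((d:ℝ)/α) + 1) / (-((d:ℝ)/α) + 1) :=
          div_nonneg_iff.mpr (Or.inr
            ⟨neg_nonpos.mpr (Real.rpow_pos_of_pos ht0 _).le, by linarith [hc]⟩)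
        have hballb : volume (ball (0 : EuclideanSpace ℝ (Fin d)) 1) = ENNReal.ofReal b :=
          (ENNReal.ofReal_toReal measure_ball_lt_top.ne).symm
        rw [hballb, ← ENNReal.ofReal_mul hs0.le, ← ENNReal.ofReal_mul hterm2,
          ← ENNReal.ofReal_add (by positivity) (mul_nonneg hterm2 hb.le)]
        apply ENNReal.ofReal_le_ofReal
        apply le_of_eq
        -- arithmetic identity
        have h3 : t0 ^ (-((d:ℝ)/α) + 1) = (s/b) ^ (1 - α/(d:ℝ)) := by
          rw [ht0def, ← Real.rpow_mul hsb.le]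
          congr 1
          field_simp
          ring
        have h5 : s * t0 = s ^ (1 - α/(d:ℝ)) * b ^ (α/(d:ℝ)) := by
          rw [ht0def, Real.div_rpow hs0.le hb.le, Real.rpow_neg hs0.le, Real.rpow_neg hb.le,
            show (1 - α/(d:ℝ)) = 1 + -(α/(d:ℝ)) by ring, Real.rpow_add hs0, Real.rpow_one,
            Real.rpow_neg hs0.le]
          field_simp
        have h6 : b * (s/b) ^ (1 - α/(d:ℝ)) = s ^ (1 - α/(d:ℝ)) * b ^ (α/(d:ℝ)) := by
          rw [Real.div_rpow hs0.le hb.le]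
          have hbq : b ^ (α/(d:ℝ)) * b ^ (1 - α/(d:ℝ)) = b := by
            rw [← Real.rpow_add hb]
            norm_num
          have hbne : b ^ (1 - α/(d:ℝ)) ≠ 0 := (Real.rpow_pos_of_pos hb _).ne'
          have hb2 : b / b ^ (1 - α/(d:ℝ)) = b ^ (α/(d:ℝ)) := by
            rw [div_eq_iff hbne]
            exact hbq.symm
          rw [show b * (s ^ (1 - α/(d:ℝ)) / b ^ (1 - α/(d:ℝ))) =
            s ^ (1 - α/(d:ℝ)) * (b / b ^ (1 - α/(d:ℝ))) by ring, hb2]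
        have h7 : -t0 ^ (-((d:ℝ)/α) + 1) / (-((d:ℝ)/α) + 1) * b =
            (b * (s/b) ^ (1 - α/(d:ℝ))) * (α / ((d:ℝ) - α)) := by
          rw [h3, div_mul_eq_mul_div, div_eq_iff hp]
          field_simp [hda.ne', hα.ne']
          ring
        rw [h5, h7, h6]
        field_simp [hda.ne']
        ring

/-- Lipschitz-type estimate for the Riesz self-interaction energy with respect to the
symmetric difference: `|V(E) - V(F)| ≤ c_{α,d} (|E|^{1-α/d} + |F|^{1-α/d}) |E Δ F|`,
with `c_{α,d} = d |B₁|^{α/d}/(d-α)`. -/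
theorem riesz_energy_lipschitz
    (d : ℕ) (hd : 0 < d) (α : ℝ) (hα : 0 < α) (hαd : α < d)
    (E F : Set (EuclideanSpace ℝ (Fin d))) (hE : MeasurableSet E) (hF : MeasurableSet F)
    (hEfin : volume E < ⊤) (hFfin : volume F < ⊤) :
    |(∫ x in E, ∫ y in E, ‖x - y‖ ^ (-α)) - ∫ x in F, ∫ y in F, ‖x - y‖ ^ (-α)| ≤
      (d * (volume (ball (0 : EuclideanSpace ℝ (Fin d)) 1)).toReal ^ (α / d) / (d - α)) *
        ((volume E).toReal ^ (1 - α / d) + (volume F).toReal ^ (1 - α / d)) *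
        (volume (E ∆ F)).toReal := by
  have hd' : (0:ℝ) < d := Nat.cast_pos.mpr hd
  have hda : (0:ℝ) < (d:ℝ) - α := by linarith
  set b : ℝ := (volume (ball (0 : EuclideanSpace ℝ (Fin d)) 1)).toReal with hbdef
  have hb : 0 < b := ENNReal.toReal_pos (measure_ball_pos _ _ one_pos).ne' measure_ball_lt_top.ne
  set c : ℝ := d * b ^ (α / d) / ((d:ℝ) - α) with hcdef
  have hc0 : 0 ≤ c := by positivity
  set κ : EuclideanSpace ℝ (Fin d) → EuclideanSpace ℝ (Fin d) → ℝ≥0∞ :=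
    fun x y => ENNReal.ofReal (‖x - y‖ ^ (-α)) with hκdef
  have hκm : Measurable (Function.uncurry κ) := by
    apply ENNReal.measurable_ofReal.comp
    fun_prop
  set L : Set (EuclideanSpace ℝ (Fin d)) → Set (EuclideanSpace ℝ (Fin d)) → ℝ≥0∞ :=
    fun A B => ∫⁻ x in A, ∫⁻ y in B, κ x y with hLdef
  -- bathtub bound on inner integrals
  have hbath : ∀ (x : EuclideanSpace ℝ (Fin d)) (B : Set (EuclideanSpace ℝ (Fin d))),
      volume B < ⊤ → (∫⁻ y in B, κ x y) ≤ ENNReal.ofReal (c * (volume B).toReal ^ (1 - α / d)) :=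
    fun x B hB => riesz_bathtub hd hα hαd x B hB
  -- bound on L
  have hbound : ∀ (A B : Set (EuclideanSpace ℝ (Fin d))), volume B < ⊤ →
      L A B ≤ ENNReal.ofReal (c * (volume B).toReal ^ (1 - α / d)) * volume A := by
    intro A B hB
    calc L A B ≤ ∫⁻ _ in A, ENNReal.ofReal (c * (volume B).toReal ^ (1 - α / d)) :=
          lintegral_mono fun x => hbath x B hB
      _ = ENNReal.ofReal (c * (volume B).toReal ^ (1 - α / d)) * volume A :=
          setLIntegral_const _ _
  -- conversion of iterated Bochner integral into L
  have hconv : ∀ (A B : Set (EuclideanSpace ℝ (Fin d))), volume B < ⊤ →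
      (∫ x in A, ∫ y in B, ‖x - y‖ ^ (-α)) = (L A B).toReal := by
    intro A B hB
    have hinnerfin : ∀ x, (∫⁻ y in B, κ x y) ≠ ⊤ :=
      fun x => ((hbath x B hB).trans_lt ENNReal.ofReal_lt_top).ne
    have hmeasinner : Measurable fun x => ∫⁻ y in B, κ x y :=
      Measurable.lintegral_prod_right' hκm
    have hinner : ∀ x : EuclideanSpace ℝ (Fin d),
        (∫ y in B, ‖x - y‖ ^ (-α)) = (∫⁻ y in B, κ x y).toReal := fun x =>
      integral_eq_lintegral_of_nonneg_ae
        (ae_of_all _ fun y => Real.rpow_nonneg (norm_nonneg _) _)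
        ((by fun_prop : Measurable fun y : EuclideanSpace ℝ (Fin d) =>
          ‖x - y‖ ^ (-α)).aestronglyMeasurable)
    simp_rw [hinner]
    rw [integral_eq_lintegral_of_nonneg_ae
        (ae_of_all _ fun x => ENNReal.toReal_nonneg)
        hmeasinner.ennreal_toReal.aestronglyMeasurable]
    congr 1
    refine lintegral_congr fun x => ?_
    rw [ENNReal.ofReal_toReal (hinnerfin x)]
  -- swap
  have hswap : ∀ (A B : Set (EuclideanSpace ℝ (Fin d))), L A B = L B A := by
    intro A B
    rw [hLdef]
    simp only
    rw [lintegral_lintegral_swap (hκm.aemeasurable)]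
    exact lintegral_congr fun y => lintegral_congr fun x => by
      simp only [hκdef, norm_sub_rev]
  -- product form
  set J : Set (EuclideanSpace ℝ (Fin d) × EuclideanSpace ℝ (Fin d)) → ℝ≥0∞ :=
    fun S => ∫⁻ z in S, Function.uncurry κ z ∂(volume.prod volume) with hJdef
  have hprod : ∀ (A B : Set (EuclideanSpace ℝ (Fin d))), L A B = J (A ×ˢ B) := by
    intro A B
    rw [hJdef, hLdef]
    simp only
    calc (∫⁻ x in A, ∫⁻ y in B, κ x y)
        = ∫⁻ z, Function.uncurry κ z ∂((volume.restrict A).prod (volume.restrict B)) :=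
          (lintegral_prod _ hκm.aemeasurable).symm
      _ = ∫⁻ z in A ×ˢ B, Function.uncurry κ z ∂(volume.prod volume) := by
          rw [Measure.prod_restrict]
  -- symmetric difference
  set Δ : Set (EuclideanSpace ℝ (Fin d)) := E ∆ F with hΔdef
  have hΔfin : volume Δ < ⊤ :=
    lt_of_le_of_lt (measure_mono symmDiff_subset_union)
      ((measure_union_le E F).trans_lt (ENNReal.add_lt_top.mpr ⟨hEfin, hFfin⟩))
  set ME : ℝ≥0∞ := ENNReal.ofReal (c * (volume E).toReal ^ (1 - α / d)) with hMEdef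
  set MF : ℝ≥0∞ := ENNReal.ofReal (c * (volume F).toReal ^ (1 - α / d)) with hMFdef
  have hLEΔ : L E Δ ≤ ME * volume Δ := by
    rw [hswap E Δ]; exact hbound Δ E hEfin
  have hLΔF : L Δ F ≤ MF * volume Δ := hbound Δ F hFfin
  have hLFΔ : L F Δ ≤ MF * volume Δ := by
    rw [hswap F Δ]; exact hbound Δ F hFfin
  have hLΔE : L Δ E ≤ ME * volume Δ := hbound Δ E hEfin
  have hsub1 : E ×ˢ E ⊆ (F ×ˢ F) ∪ ((E ×ˢ Δ) ∪ (Δ ×ˢ F)) := by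
    rintro ⟨x, y⟩ ⟨hx, hy⟩
    by_cases hyF : y ∈ F
    · by_cases hxF : x ∈ F
      · exact Or.inl ⟨hxF, hyF⟩
      · exact Or.inr (Or.inr ⟨mem_symmDiff.mpr (Or.inl ⟨hx, hxF⟩), hyF⟩)
    · exact Or.inr (Or.inl ⟨hx, mem_symmDiff.mpr (Or.inl ⟨hy, hyF⟩)⟩)
  have hsub2 : F ×ˢ F ⊆ (E ×ˢ E) ∪ ((F ×ˢ Δ) ∪ (Δ ×ˢ E)) := by
    rintro ⟨x, y⟩ ⟨hx, hy⟩
    by_cases hyE : y ∈ E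
    · by_cases hxE : x ∈ E
      · exact Or.inl ⟨hxE, hyE⟩
      · exact Or.inr (Or.inr ⟨mem_symmDiff.mpr (Or.inr ⟨hx, hxE⟩), hyE⟩)
    · exact Or.inr (Or.inl ⟨hx, mem_symmDiff.mpr (Or.inr ⟨hy, hyE⟩)⟩)
  set D : ℝ≥0∞ := ME * volume Δ + MF * volume Δ with hDdef
  have h1 : L E E ≤ L F F + D := by
    rw [hprod E E, hprod F F]
    calc J (E ×ˢ E) ≤ J ((F ×ˢ F) ∪ ((E ×ˢ Δ) ∪ (Δ ×ˢ F))) := lintegral_mono_set hsub1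
      _ ≤ J (F ×ˢ F) + J ((E ×ˢ Δ) ∪ (Δ ×ˢ F)) := lintegral_union_le _ _ _
      _ ≤ J (F ×ˢ F) + (J (E ×ˢ Δ) + J (Δ ×ˢ F)) := by
          gcongr
          exact lintegral_union_le _ _ _
      _ ≤ J (F ×ˢ F) + D := by
          rw [hDdef, ← hprod E Δ, ← hprod Δ F]
          gcongr
  have h2 : L F F ≤ L E E + D := by
    rw [hprod E E, hprod F F]
    calc J (F ×ˢ F) ≤ J ((E ×ˢ E) ∪ ((F ×ˢ Δ) ∪ (Δ ×ˢ E))) := lintegral_mono_set hsub2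
      _ ≤ J (E ×ˢ E) + J ((F ×ˢ Δ) ∪ (Δ ×ˢ E)) := lintegral_union_le _ _ _
      _ ≤ J (E ×ˢ E) + (J (F ×ˢ Δ) + J (Δ ×ˢ E)) := by
          gcongr
          exact lintegral_union_le _ _ _
      _ ≤ J (E ×ˢ E) + (MF * volume Δ + ME * volume Δ) := by
          rw [← hprod F Δ, ← hprod Δ E]
          gcongr
      _ = J (E ×ˢ E) + D := by
          rw [hDdef, add_comm (ME * volume Δ)]
  -- finiteness
  have hLEEne : L E E ≠ ⊤ :=
    ((hbound E E hEfin).trans_lt (ENNReal.mul_lt_top ENNReal.ofReal_lt_top hEfin)).ne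
  have hLFFne : L F F ≠ ⊤ :=
    ((hbound F F hFfin).trans_lt (ENNReal.mul_lt_top ENNReal.ofReal_lt_top hFfin)).ne
  have hDne : D ≠ ⊤ :=
    (ENNReal.add_lt_top.mpr
      ⟨ENNReal.mul_lt_top ENNReal.ofReal_lt_top hΔfin,
        ENNReal.mul_lt_top ENNReal.ofReal_lt_top hΔfin⟩).ne
  have hDtoReal : D.toReal =
      c * ((volume E).toReal ^ (1 - α / d) + (volume F).toReal ^ (1 - α / d)) *
        (volume Δ).toReal := by
    rw [hDdef, ENNReal.toReal_add (ENNReal.mul_lt_top ENNReal.ofReal_lt_top hΔfin).ne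
        (ENNReal.mul_lt_top ENNReal.ofReal_lt_top hΔfin).ne,
      ENNReal.toReal_mul, ENNReal.toReal_mul,
      ENNReal.toReal_ofReal (mul_nonneg hc0 (Real.rpow_nonneg ENNReal.toReal_nonneg _)),
      ENNReal.toReal_ofReal (mul_nonneg hc0 (Real.rpow_nonneg ENNReal.toReal_nonneg _))]
    ring
  rw [hconv E E hEfin, hconv F F hFfin, abs_sub_le_iff]
  have ht1 : (L E E).toReal ≤ (L F F).toReal + D.toReal := by
    have h := ENNReal.toReal_mono (by rw [ENNReal.add_ne_top]; exact ⟨hLFFne, hDne⟩) h1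
    rwa [ENNReal.toReal_add hLFFne hDne] at h
  have ht2 : (L F F).toReal ≤ (L E E).toReal + D.toReal := by
    have h := ENNReal.toReal_mono (by rw [ENNReal.add_ne_top]; exact ⟨hLEEne, hDne⟩) h2
    rwa [ENNReal.toReal_add hLEEne hDne] at h
  constructor
  · linarith [hDtoReal, ht1]
  · linarith [hDtoReal, ht2]
end

section
/- If a convex polygon P in the plane with an odd number n of sides is reflection symmetric with respect to the bisectors of all of its interior angles, then P is a regular n-gon (all sides equal and all interior angles equal). -/
open Set EuclideanGeometry

/-- A convex polygon in the plane with an odd number `n` of sides that is reflection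
symmetric with respect to the bisectors of all of its interior angles (encoded by: for
each vertex `i` there is an isometry of the plane exchanging the vertices `v (i+k)` and
`v (i-k)`) is a regular `n`-gon: all sides have equal length and all interior angles are
equal. -/
theorem odd_bisector_symmetric_polygon_regular
    (n : ℕ) (hn : 3 ≤ n) (hodd : Odd n) (v : ZMod n → EuclideanSpace ℝ (Fin 2))
    (hconv : ∀ i : ZMod n, v i ∉ convexHull ℝ (Set.range v \ {v i}))
    (hsym : ∀ i : ZMod n,
      ∃ S : EuclideanSpace ℝ (Fin 2) ≃ᵃⁱ[ℝ] EuclideanSpace ℝ (Fin 2),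
        ∀ k : ZMod n, S (v (i + k)) = v (i - k)) :
    ∀ i j : ZMod n,
      dist (v i) (v (i + 1)) = dist (v j) (v (j + 1)) ∧
      ∠ (v (i - 1)) (v i) (v (i + 1)) = ∠ (v (j - 1)) (v j) (v (j + 1)) := by
  intro i j
  obtain ⟨m, hm⟩ := hodd
  -- inverse of 2 in ZMod n
  set c : ZMod n := ((m + 1 : ℕ) : ZMod n) with hc
  have h2c : (2 : ZMod n) * c = 1 := by
    have : ((2 * (m + 1) : ℕ) : ZMod n) = ((n + 1 : ℕ) : ZMod n) := by
      congr 1; omega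
    push_cast at this
    rw [hc]
    push_cast
    rw [this]
    simp [ZMod.natCast_self]
  set a : ZMod n := (j - i) * c with ha
  have h2a : a + a = j - i := by
    have : a + a = (j - i) * ((2 : ZMod n) * c) := by ring
    rw [this, h2c, mul_one]
  obtain ⟨S0, h0⟩ := hsym 0
  obtain ⟨Sa, hA⟩ := hsym a
  set T : EuclideanSpace ℝ (Fin 2) ≃ᵃⁱ[ℝ] EuclideanSpace ℝ (Fin 2) := S0.trans Sa with hT
  have key : ∀ k : ZMod n, T (v k) = v (k + (j - i)) := by
    intro k
    have e0 : S0 (v k) = v (-k) := by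
      have := h0 k; simpa using this
    have ea : Sa (v (-k)) = v (k + (j - i)) := by
      have := hA (-k - a)
      have h1 : a + (-k - a) = -k := by ring
      have h2 : a - (-k - a) = k + (j - i) := by
        rw [← h2a]; ring
      rw [h1, h2] at this
      exact this
    simp [hT, e0, ea]
  have hd : ∀ x y : EuclideanSpace ℝ (Fin 2), dist (T x) (T y) = dist x y :=
    T.dist_map
  constructor
  · have := hd (v i) (v (i + 1))
    rw [key, key] at this
    have e1 : i + (j - i) = j := by ring
    have e2 : i + 1 + (j - i) = j + 1 := by ring
    rw [e1, e2] at this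
    exact this.symm
  · have := T.toAffineIsometry.angle_map (v (i - 1)) (v i) (v (i + 1))
    simp only [AffineIsometryEquiv.coe_toAffineIsometry] at this
    rw [key, key, key] at this
    have e1 : i - 1 + (j - i) = j - 1 := by ring
    have e2 : i + (j - i) = j := by ring
    have e3 : i + 1 + (j - i) = j + 1 := by ring
    rw [e1, e2, e3] at this
    exact this.symm
end

section
/- If a convex polygon P in the plane is reflection symmetric with respect to the bisectors of all of its interior angles, then its interior angles take at most two values, which alternate around the polygon. -/
open Set EuclideanGeometry

/-- If a convex polygon in the plane is reflection symmetric with respect to the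
bisectors of all of its interior angles (encoded by: for each vertex `i` there is an
isometry of the plane exchanging the vertices `v (i+k)` and `v (i-k)`), then its
interior angles take at most two values, which alternate around the polygon:
the angle at each vertex equals the angle two vertices further along. -/
theorem bisector_symmetric_polygon_angles_alternate
    (n : ℕ) (hn : 3 ≤ n) (v : ZMod n → EuclideanSpace ℝ (Fin 2))
    (hconv : ∀ i : ZMod n, v i ∉ convexHull ℝ (Set.range v \ {v i}))
    (hsym : ∀ i : ZMod n,
      ∃ S : EuclideanSpace ℝ (Fin 2) ≃ᵃⁱ[ℝ] EuclideanSpace ℝ (Fin 2),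
        ∀ k : ZMod n, S (v (i + k)) = v (i - k)) :
    ∀ i : ZMod n,
      ∠ (v (i - 1)) (v i) (v (i + 1)) = ∠ (v (i + 1)) (v (i + 2)) (v (i + 3)) := by
  intro i
  obtain ⟨S, hS⟩ := hsym (i + 1)
  have h1 := hS 0
  have h2 := hS 1
  have h3 := hS 2
  rw [add_zero, sub_zero] at h1
  rw [show i + 1 + 1 = i + 2 by ring, show i + 1 - 1 = i by ring] at h2
  rw [show i + 1 + 2 = i + 3 by ring, show i + 1 - 2 = i - 1 by ring] at h3
  have key := S.toAffineIsometry.angle_map (v (i + 1)) (v (i + 2)) (v (i + 3))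
  rw [AffineIsometryEquiv.coe_toAffineIsometry] at key
  rw [h1, h2, h3] at key
  rw [← key, angle_comm]
end

section
/- Let P be a convex polygon in the plane that is reflection symmetric with respect to the bisectors of all of its interior angles. Then for every pair of sides L_i, L_j of P there exists an isometry S of R^2 with S(L_i) = L_j and S(P) = P; such an isometry can be taken as a composition of reflections across bisectors of the angles of P. -/
open Set EuclideanGeometry

/-- Let `P` be a convex polygon in the plane (the convex hull of its vertices
`v 0, …, v (n-1)` in cyclic order, each vertex extreme), reflection symmetric with
respect to the bisectors of all of its interior angles (encoded by: for each vertex `i`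
there is an isometry of the plane exchanging the vertices `v (i+k)` and `v (i-k)`).
Then for every pair of sides `L_i`, `L_j` there is an isometry `S` of the plane with
`S(L_i) = L_j` and `S(P) = P`. -/
theorem bisector_symmetric_polygon_side_transitive
    (n : ℕ) (hn : 3 ≤ n) (v : ZMod n → EuclideanSpace ℝ (Fin 2))
    (hconv : ∀ i : ZMod n, v i ∉ convexHull ℝ (Set.range v \ {v i}))
    (hsym : ∀ i : ZMod n,
      ∃ S : EuclideanSpace ℝ (Fin 2) ≃ᵃⁱ[ℝ] EuclideanSpace ℝ (Fin 2),
        ∀ k : ZMod n, S (v (i + k)) = v (i - k)) :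
    ∀ i j : ZMod n,
      ∃ S : EuclideanSpace ℝ (Fin 2) ≃ᵃⁱ[ℝ] EuclideanSpace ℝ (Fin 2),
        S '' segment ℝ (v i) (v (i + 1)) = segment ℝ (v j) (v (j + 1)) ∧
        S '' convexHull ℝ (Set.range v) = convexHull ℝ (Set.range v) := by
  intro i j
  haveI : NeZero n := ⟨by omega⟩
  -- If an isometry permutes the vertices, it preserves the hull of the vertices.
  have key : ∀ (T : EuclideanSpace ℝ (Fin 2) ≃ᵃⁱ[ℝ] EuclideanSpace ℝ (Fin 2))
      (σ : ZMod n → ZMod n), Function.Surjective σ → (∀ m, T (v m) = v (σ m)) →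
      T '' convexHull ℝ (Set.range v) = convexHull ℝ (Set.range v) := by
    intro T σ hσ h
    have hmap : (⇑T ∘ v) = v ∘ σ := funext h
    have hr : ⇑T '' Set.range v = Set.range v := by
      rw [← Set.range_comp, hmap, Set.range_comp, hσ.range_eq, Set.image_univ]
    have himg : ∀ s : Set (EuclideanSpace ℝ (Fin 2)),
        ⇑T '' convexHull ℝ s = convexHull ℝ (⇑T '' s) := by
      intro s
      have := AffineMap.image_convexHull (𝕜 := ℝ) T.toAffineIsometry.toAffineMap s
      rw [AffineIsometry.coe_toAffineMap, AffineIsometryEquiv.coe_toAffineIsometry] at this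
      exact this
    rw [himg, hr]
  have seg : ∀ (T : EuclideanSpace ℝ (Fin 2) ≃ᵃⁱ[ℝ] EuclideanSpace ℝ (Fin 2))
      (a b : EuclideanSpace ℝ (Fin 2)),
      ⇑T '' segment ℝ a b = segment ℝ (T a) (T b) := by
    intro T a b
    have := image_segment ℝ T.toAffineIsometry.toAffineMap a b
    rw [AffineIsometry.coe_toAffineMap, AffineIsometryEquiv.coe_toAffineIsometry] at this
    simpa using this
  -- parity dichotomy in `ZMod n`
  have hpar : (∃ c : ZMod n, j - i = c + c) ∨ (∃ c : ZMod n, i + j + 1 = c + c) := by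
    rcases Nat.even_or_odd (j - i).val with ⟨k, hk⟩ | ⟨k, hk⟩
    · left
      refine ⟨(k : ZMod n), ?_⟩
      have h1 : ((((j - i).val : ℕ)) : ZMod n) = j - i := ZMod.natCast_rightInverse _
      rw [← h1, hk]
      push_cast
      ring
    · right
      refine ⟨i + (k : ZMod n) + 1, ?_⟩
      have h1 : ((((j - i).val : ℕ)) : ZMod n) = j - i := ZMod.natCast_rightInverse _
      rw [hk] at h1
      push_cast at h1
      linear_combination -h1
  rcases hpar with ⟨c, hc⟩ | ⟨c, hc⟩
  · -- even shift: compose two reflections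
    obtain ⟨S0, h0⟩ := hsym 0
    obtain ⟨Sc, hcS⟩ := hsym c
    refine ⟨S0.trans Sc, ?_, ?_⟩
    · have hT : ∀ m : ZMod n, (S0.trans Sc) (v m) = v (m + (c + c)) := by
        intro m
        have e0 : S0 (v m) = v (-m) := by
          have := h0 m; rwa [zero_add, zero_sub] at this
        have ec : Sc (v (-m)) = v (m + (c + c)) := by
          have := hcS (-m - c)
          have h2 : c + (-m - c) = -m := by ring
          have h3 : c - (-m - c) = m + (c + c) := by ring
          rwa [h2, h3] at this
        simp [AffineIsometryEquiv.coe_trans, e0, ec]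
      rw [seg, hT i, hT (i + 1)]
      have hij : i + (c + c) = j := by rw [← hc]; ring
      have hij'' : i + 1 + (c + c) = j + 1 := by
        have : i + 1 + (c + c) = (i + (c + c)) + 1 := by ring
        rw [this, hij]
      rw [hij, hij'']
    · refine key _ (fun m => m + (c + c)) ?_ ?_
      · intro y; exact ⟨y - (c + c), by ring⟩
      · intro m
        have e0 : S0 (v m) = v (-m) := by
          have := h0 m; rwa [zero_add, zero_sub] at this
        have ec : Sc (v (-m)) = v (m + (c + c)) := by
          have := hcS (-m - c)
          have h2 : c + (-m - c) = -m := by ring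
          have h3 : c - (-m - c) = m + (c + c) := by ring
          rwa [h2, h3] at this
        simp [AffineIsometryEquiv.coe_trans, e0, ec]
  · -- odd shift: a single reflection swaps the two sides (reversing endpoints)
    obtain ⟨Sc, hcS⟩ := hsym c
    have hT : ∀ m : ZMod n, Sc (v m) = v (c + c - m) := by
      intro m
      have := hcS (m - c)
      have h2 : c + (m - c) = m := by ring
      have h3 : c - (m - c) = c + c - m := by ring
      rwa [h2, h3] at this
    refine ⟨Sc, ?_, ?_⟩
    · rw [seg, hT i, hT (i + 1)]
      have e1 : c + c - i = j + 1 := by rw [← hc]; ring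
      have e2 : c + c - (i + 1) = j := by rw [← hc]; ring
      rw [e1, e2, segment_symm]
    · refine key _ (fun m => c + c - m) ?_ hT
      intro y; exact ⟨c + c - y, by ring⟩
end

section
/- Let R_1 and R_2 be two planar rectangles of dimensions ℓ × d_1 and ℓ × 2d_1 respectively, touching at a single vertex so that their bases meet at an angle θ ∈ (0,π). Then for 0 < α < 2 there is a constant C depending only on θ, ℓ and α such that the Riesz interaction I(R_1,R_2) = ∫_{R_1}∫_{R_2}|x−y|^{−α} dx dy ≤ C d_1^2 for all sufficiently small d_1 > 0. -/
open Real Set MeasureTheory intervalIntegral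

/- ## Auxiliary 1-D integral lemmas -/

lemma aux_one_add_cos_pos {q : ℝ} (hq0 : -1 < q) (hq1 : q < 0) : 0 < 1 + Real.cos (q * π) := by
  have h2 : Real.cos (q * π / 2) ^ 2 = 1 / 2 + Real.cos (2 * (q * π / 2)) / 2 := Real.cos_sq _
  rw [show 2 * (q * π / 2) = q * π by ring] at h2
  have hc : 0 < Real.cos (q * π / 2) := by
    apply Real.cos_pos_of_mem_Ioo
    constructor
    · nlinarith [Real.pi_pos]
    · nlinarith [Real.pi_pos]
  nlinarith

lemma aux_abs_rpow_eq {q : ℝ} (hq0 : -1 < q) (hq1 : q < 0) :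
    (fun x : ℝ => |x| ^ q) =
      fun x => (x ^ q + (-x) ^ q) / (1 + Real.cos (q * π)) := by
  have hc := aux_one_add_cos_pos hq0 hq1
  funext x
  rcases lt_trichotomy x 0 with hx | rfl | hx
  · have h1 : x ^ q = |x| ^ q * Real.cos (q * π) := by
      rw [Real.rpow_def_of_neg hx, abs_of_neg hx,
        Real.rpow_def_of_pos (by linarith : (0:ℝ) < -x), Real.log_neg_eq_log]
    have h2 : (-x) ^ q = |x| ^ q := by rw [abs_of_neg hx]
    rw [h1, h2]; field_simp; ring
  · simp [Real.zero_rpow (by linarith : q ≠ 0)]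
  · have h1 : (-x) ^ q = |x| ^ q * Real.cos (q * π) := by
      rw [Real.rpow_def_of_neg (by linarith : -x < 0), abs_of_pos hx,
        Real.rpow_def_of_pos hx, Real.log_neg_eq_log]
    have h2 : x ^ q = |x| ^ q := by rw [abs_of_pos hx]
    rw [h1, h2]; field_simp

lemma aux_intervalIntegrable_abs_rpow {q : ℝ} (hq0 : -1 < q) (hq1 : q < 0) (a b : ℝ) :
    IntervalIntegrable (fun x => |x| ^ q) volume a b := by
  rw [aux_abs_rpow_eq hq0 hq1]
  have h1 : IntervalIntegrable (fun x : ℝ => x ^ q) volume a b :=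
    intervalIntegral.intervalIntegrable_rpow' hq0
  have h2 : IntervalIntegrable (fun x : ℝ => (-x) ^ q) volume a b := by
    have := (intervalIntegral.intervalIntegrable_rpow' (a := -a) (b := -b) hq0 (r := q))
    have := (IntervalIntegrable.iff_comp_neg).mp this
    simpa using this
  exact (h1.add h2).div_const _

lemma aux_integral_abs_rpow_nonneg {q : ℝ} (hq0 : -1 < q) {b : ℝ} (hb : 0 ≤ b) :
    ∫ x in (0:ℝ)..b, |x| ^ q = b ^ (q + 1) / (q + 1) := by
  have : ∫ x in (0:ℝ)..b, |x| ^ q = ∫ x in (0:ℝ)..b, x ^ q := by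
    apply intervalIntegral.integral_congr
    intro x hx
    rw [Set.uIcc_of_le hb] at hx
    simp [abs_of_nonneg hx.1]
  rw [this, integral_rpow (Or.inl hq0)]
  rw [Real.zero_rpow (by linarith : q + 1 ≠ 0)]
  ring

lemma aux_key_abs_rpow_bound {q : ℝ} (hq0 : -1 < q) (hq1 : q < 0) (c h : ℝ) (hh : 0 ≤ h) :
    ∫ x in c..(c + h), |x| ^ q ≤ 2 * (h ^ (q + 1) / (q + 1)) := by
  have hq1' : (0:ℝ) < q + 1 := by linarith
  have hnn : ∀ x : ℝ, 0 ≤ |x| ^ q := fun x => Real.rpow_nonneg (abs_nonneg x) q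
  rcases le_or_gt 0 c with hc | hc
  · -- c ≥ 0
    have hle : c ≤ c + h := by linarith
    rw [intervalIntegral.integral_of_le hle, integral_Ioc_eq_integral_Ioo]
    have hmono : ∫ x in Ioo c (c + h), |x| ^ q ≤ ∫ x in Ioo c (c + h), (x - c) ^ q := by
      apply setIntegral_mono_on
      · exact (aux_intervalIntegrable_abs_rpow hq0 hq1 c (c+h)).1.mono_set Ioo_subset_Ioc_self
      · have : IntervalIntegrable (fun x => (x - c) ^ q) volume c (c + h) := by
          have := (intervalIntegral.intervalIntegrable_rpow' (a := 0) (b := h) hq0 (r := q))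
          have := this.comp_sub_right c
          simpa [add_comm] using this
        exact this.1.mono_set Ioo_subset_Ioc_self
      · exact measurableSet_Ioo
      · intro x hx
        rw [abs_of_nonneg (by nlinarith [hx.1] : (0:ℝ) ≤ x)]
        exact Real.rpow_le_rpow_of_nonpos (by linarith [hx.1]) (by linarith) hq1.le
    calc ∫ x in Ioo c (c + h), |x| ^ q ≤ ∫ x in Ioo c (c + h), (x - c) ^ q := hmono
      _ = ∫ x in c..(c+h), (x - c) ^ q := by
          rw [intervalIntegral.integral_of_le hle, integral_Ioc_eq_integral_Ioo]
      _ = ∫ x in (c - c)..(c + h - c), x ^ q :=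
          intervalIntegral.integral_comp_sub_right (fun x => x ^ q) c
      _ = h ^ (q+1) / (q+1) := by
          rw [show c - c = (0:ℝ) by ring, show c + h - c = h by ring,
            integral_rpow (Or.inl hq0), Real.zero_rpow (by linarith : q + 1 ≠ 0)]
          ring
      _ ≤ 2 * (h ^ (q+1) / (q+1)) := by
          have : 0 ≤ h ^ (q+1) / (q+1) := by positivity
          linarith
  · rcases le_or_gt (c + h) 0 with hch | hch
    · -- c + h ≤ 0
      have hle : c ≤ c + h := by linarith
      have hint2 : IntervalIntegrable (fun x => (c + h - x) ^ q) volume c (c + h) := by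
        have := (intervalIntegral.intervalIntegrable_rpow' (a := 0) (b := h) hq0 (r := q))
        have := this.comp_sub_left (c + h)
        simpa using this.symm
      rw [intervalIntegral.integral_of_le hle, integral_Ioc_eq_integral_Ioo]
      have hmono : ∫ x in Ioo c (c + h), |x| ^ q ≤ ∫ x in Ioo c (c + h), (c + h - x) ^ q := by
        apply setIntegral_mono_on
        · exact (aux_intervalIntegrable_abs_rpow hq0 hq1 c (c+h)).1.mono_set Ioo_subset_Ioc_self
        · exact hint2.1.mono_set Ioo_subset_Ioc_self
        · exact measurableSet_Ioo
        · intro x hx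
          rw [abs_of_neg (by nlinarith [hx.2] : x < (0:ℝ))]
          exact Real.rpow_le_rpow_of_nonpos (by linarith [hx.2]) (by linarith) hq1.le
      calc ∫ x in Ioo c (c + h), |x| ^ q ≤ ∫ x in Ioo c (c + h), (c + h - x) ^ q := hmono
        _ = ∫ x in c..(c+h), (c + h - x) ^ q := by
            rw [intervalIntegral.integral_of_le hle, integral_Ioc_eq_integral_Ioo]
        _ = ∫ x in (c + h - (c+h))..(c + h - c), x ^ q :=
            intervalIntegral.integral_comp_sub_left (fun x => x ^ q) (c + h)
        _ = h ^ (q+1) / (q+1) := by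
            rw [show c + h - (c + h) = (0:ℝ) by ring, show c + h - c = h by ring,
              integral_rpow (Or.inl hq0), Real.zero_rpow (by linarith : q + 1 ≠ 0)]
            ring
        _ ≤ 2 * (h ^ (q+1) / (q+1)) := by
            have : 0 ≤ h ^ (q+1) / (q+1) := by positivity
            linarith
    · -- c < 0 < c + h
      have hsplit : ∫ x in c..(c+h), |x| ^ q
          = (∫ x in c..(0:ℝ), |x| ^ q) + ∫ x in (0:ℝ)..(c+h), |x| ^ q :=
        (intervalIntegral.integral_add_adjacent_intervals
          (aux_intervalIntegrable_abs_rpow hq0 hq1 c 0)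
          (aux_intervalIntegrable_abs_rpow hq0 hq1 0 (c+h))).symm
      have hneg : ∫ x in c..(0:ℝ), |x| ^ q = ∫ x in (0:ℝ)..(-c), |x| ^ q := by
        have := intervalIntegral.integral_comp_neg (a := (0:ℝ)) (b := -c)
          (f := fun x => |x| ^ q)
        simp only [abs_neg, neg_neg, neg_zero] at this
        rw [this]
      rw [hsplit, hneg, aux_integral_abs_rpow_nonneg hq0 (by linarith : (0:ℝ) ≤ -c),
        aux_integral_abs_rpow_nonneg hq0 (by linarith : (0:ℝ) ≤ c + h)]
      have h1 : (-c) ^ (q+1) ≤ h ^ (q+1) :=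
        Real.rpow_le_rpow (by linarith) (by linarith) (by linarith)
      have h2 : (c+h) ^ (q+1) ≤ h ^ (q+1) :=
        Real.rpow_le_rpow (by linarith) (by linarith) (by linarith)
      have hd1 : (-c) ^ (q+1) / (q+1) ≤ h ^ (q+1) / (q+1) := by gcongr
      have hd2 : (c+h) ^ (q+1) / (q+1) ≤ h ^ (q+1) / (q+1) := by gcongr
      linarith

lemma aux_intervalIntegrable_abs_rpow_sub {q : ℝ} (hq0 : -1 < q) (hq1 : q < 0)
    (w a b : ℝ) : IntervalIntegrable (fun x => |w - x| ^ q) volume a b := by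
  have h := (aux_intervalIntegrable_abs_rpow hq0 hq1 (w - a) (w - b)).comp_sub_left w
  simpa using h

lemma aux_integrableOn_abs_rpow_sub {q : ℝ} (hq0 : -1 < q) (hq1 : q < 0)
    (w a b : ℝ) (hab : a ≤ b) : IntegrableOn (fun x => |w - x| ^ q) (Icc a b) volume :=
  (intervalIntegrable_iff_integrableOn_Icc_of_le hab).mp
    (aux_intervalIntegrable_abs_rpow_sub hq0 hq1 w a b)

lemma aux_abs_add_eq_abs_sub (w : ℝ) :
    (fun x : ℝ => |w + x|) = fun x => |(-w) - x| := by
  funext x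
  rw [show -w - x = -(w + x) by ring, abs_neg]

lemma aux_integrableOn_abs_rpow_add {q : ℝ} (hq0 : -1 < q) (hq1 : q < 0)
    (w a b : ℝ) (hab : a ≤ b) : IntegrableOn (fun x => |w + x| ^ q) (Icc a b) volume := by
  have : (fun x : ℝ => |w + x| ^ q) = fun x => |(-w) - x| ^ q := by
    funext x
    rw [show -w - x = -(w + x) by ring, abs_neg]
  rw [this]
  exact aux_integrableOn_abs_rpow_sub hq0 hq1 (-w) a b hab

lemma aux_setIntegral_abs_rpow_sub_le {q : ℝ} (hq0 : -1 < q) (hq1 : q < 0)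
    (w a b : ℝ) (hab : a ≤ b) :
    ∫ x in Icc a b, |w - x| ^ q ≤ 2 * ((b - a) ^ (q + 1) / (q + 1)) := by
  rw [integral_Icc_eq_integral_Ioc, ← intervalIntegral.integral_of_le hab]
  have h1 : (∫ x in a..b, |w - x| ^ q) = ∫ x in (w - b)..(w - a), |x| ^ q :=
    intervalIntegral.integral_comp_sub_left (fun x => |x| ^ q) w
  rw [h1, show w - a = (w - b) + (b - a) by ring]
  exact aux_key_abs_rpow_bound hq0 hq1 (w - b) (b - a) (by linarith)

lemma aux_setIntegral_abs_rpow_add_le {q : ℝ} (hq0 : -1 < q) (hq1 : q < 0)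
    (w a b : ℝ) (hab : a ≤ b) :
    ∫ x in Icc a b, |w + x| ^ q ≤ 2 * ((b - a) ^ (q + 1) / (q + 1)) := by
  have : (fun x : ℝ => |w + x| ^ q) = fun x => |(-w) - x| ^ q := by
    funext x
    rw [show -w - x = -(w + x) by ring, abs_neg]
  rw [show (∫ x in Icc a b, |w + x| ^ q) = ∫ x in Icc a b, |(-w) - x| ^ q by rw [this]]
  exact aux_setIntegral_abs_rpow_sub_le hq0 hq1 (-w) a b hab

/- ## The parametrizing maps -/

noncomputable def Tmap : ℝ × ℝ → EuclideanSpace ℝ (Fin 2) :=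
  fun p => (WithLp.equiv 2 (Fin 2 → ℝ)).symm ![p.1, p.2]

noncomputable def rotL (θ : ℝ) : EuclideanSpace ℝ (Fin 2) →ₗ[ℝ] EuclideanSpace ℝ (Fin 2) :=
  Matrix.toEuclideanLin !![-(Real.cos θ), Real.sin θ; -(Real.sin θ), -(Real.cos θ)]

lemma rotL_apply0 (θ : ℝ) (x : EuclideanSpace ℝ (Fin 2)) :
    rotL θ x 0 = -(Real.cos θ) * x 0 + Real.sin θ * x 1 := by
  simp [rotL, Matrix.toEuclideanLin_apply, Matrix.mulVec, dotProduct, Fin.sum_univ_two, Matrix.vecHead, Matrix.vecTail]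

lemma rotL_apply1 (θ : ℝ) (x : EuclideanSpace ℝ (Fin 2)) :
    rotL θ x 1 = -(Real.sin θ) * x 0 + -(Real.cos θ) * x 1 := by
  simp [rotL, Matrix.toEuclideanLin_apply, Matrix.mulVec, dotProduct, Fin.sum_univ_two, Matrix.vecHead, Matrix.vecTail]

lemma rotL_norm (θ : ℝ) (x : EuclideanSpace ℝ (Fin 2)) : ‖rotL θ x‖ = ‖x‖ := by
  rw [EuclideanSpace.norm_eq, EuclideanSpace.norm_eq]
  congr 1
  simp only [Fin.sum_univ_two, rotL_apply0, rotL_apply1, Real.norm_eq_abs, sq_abs]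
  nlinarith [Real.sin_sq_add_cos_sq θ]

noncomputable def rotI (θ : ℝ) : EuclideanSpace ℝ (Fin 2) ≃ₗᵢ[ℝ] EuclideanSpace ℝ (Fin 2) :=
  LinearIsometry.toLinearIsometryEquiv ⟨rotL θ, rotL_norm θ⟩ rfl

noncomputable def Psi (ℓ θ : ℝ) : ℝ × ℝ → EuclideanSpace ℝ (Fin 2) :=
  fun p => Tmap (ℓ, 0) + rotI θ (Tmap p)

lemma Tmap_apply0 (p : ℝ × ℝ) : Tmap p 0 = p.1 := rfl
lemma Tmap_apply1 (p : ℝ × ℝ) : Tmap p 1 = p.2 := rfl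

lemma Psi_eq (ℓ θ : ℝ) (p : ℝ × ℝ) :
    Psi ℓ θ p = (WithLp.equiv 2 (Fin 2 → ℝ)).symm
      ![ℓ - p.1 * Real.cos θ + p.2 * Real.sin θ,
        -(p.1 * Real.sin θ) - p.2 * Real.cos θ] := by
  have h0 : Psi ℓ θ p 0 = ℓ - p.1 * Real.cos θ + p.2 * Real.sin θ := by
    show Tmap (ℓ, 0) 0 + rotL θ (Tmap p) 0 = _
    rw [rotL_apply0, Tmap_apply0, Tmap_apply0, Tmap_apply1]
    ring
  have h1 : Psi ℓ θ p 1 = -(p.1 * Real.sin θ) - p.2 * Real.cos θ := by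
    show Tmap (ℓ, 0) 1 + rotL θ (Tmap p) 1 = _
    rw [rotL_apply1, Tmap_apply1, Tmap_apply0, Tmap_apply1]
    ring
  ext i
  fin_cases i
  · simpa using h0
  · simpa using h1

lemma Tmap_mp : MeasurePreserving Tmap volume volume := by
  have h1 := (volume_preserving_finTwoArrow ℝ).symm
  have h2 := PiLp.volume_preserving_toLp (Fin 2)
  have : Tmap = (WithLp.equiv 2 (Fin 2 → ℝ)).symm ∘ (MeasurableEquiv.finTwoArrow).symm := by
    funext p
    simp [Tmap, MeasurableEquiv.finTwoArrow]
  rw [this]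
  exact h2.comp h1

lemma Tmap_emb : MeasurableEmbedding Tmap := by
  have : Tmap = (MeasurableEquiv.toLp 2 (Fin 2 → ℝ)) ∘ (MeasurableEquiv.finTwoArrow).symm := by
    funext p
    simp [Tmap, MeasurableEquiv.finTwoArrow, MeasurableEquiv.coe_toLp]
  rw [this]
  exact ((MeasurableEquiv.toLp 2 (Fin 2 → ℝ)).measurableEmbedding).comp
    (MeasurableEquiv.finTwoArrow).symm.measurableEmbedding

lemma Psi_decomp (ℓ θ : ℝ) :
    Psi ℓ θ = (fun x => Tmap (ℓ, 0) + x) ∘ (rotI θ) ∘ Tmap := rfl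

lemma Psi_mp (ℓ θ : ℝ) : MeasurePreserving (Psi ℓ θ) volume volume := by
  rw [Psi_decomp]
  exact ((measurePreserving_add_left volume (Tmap (ℓ, 0))).comp
    ((rotI θ).measurePreserving)).comp Tmap_mp

lemma Psi_emb (ℓ θ : ℝ) : MeasurableEmbedding (Psi ℓ θ) := by
  rw [Psi_decomp]
  exact (((Homeomorph.addLeft (Tmap (ℓ, 0))).measurableEmbedding).comp
    ((rotI θ).toHomeomorph.measurableEmbedding)).comp Tmap_emb

lemma norm_Tmap_sub_Psi (ℓ θ : ℝ) (p z : ℝ × ℝ) :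
    ‖Tmap p - Psi ℓ θ z‖ =
      Real.sqrt (((ℓ - p.1) * Real.cos θ - p.2 * Real.sin θ - z.1) ^ 2 +
        ((ℓ - p.1) * Real.sin θ + p.2 * Real.cos θ + z.2) ^ 2) := by
  have h0 : (Tmap p - Psi ℓ θ z) 0 = p.1 - (ℓ - z.1 * Real.cos θ + z.2 * Real.sin θ) := by
    rw [Psi_eq]
    simp [Tmap]
  have h1 : (Tmap p - Psi ℓ θ z) 1 = p.2 - (-(z.1 * Real.sin θ) - z.2 * Real.cos θ) := by
    rw [Psi_eq]
    simp [Tmap]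
  rw [EuclideanSpace.norm_eq]
  simp only [Fin.sum_univ_two, h0, h1, Real.norm_eq_abs, sq_abs]
  congr 1
  linear_combination (z.1 ^ 2 + z.2 ^ 2 - (ℓ - p.1) ^ 2 - p.2 ^ 2) * (Real.sin_sq_add_cos_sq θ)

/- ## The key pointwise bound -/

lemma aux_ptwise (α ℓ θ : ℝ) (hα0 : 0 < α) (p z : ℝ × ℝ)
    (hE0 : (ℓ - p.1) * Real.cos θ - p.2 * Real.sin θ - z.1 ≠ 0)
    (hE1 : (ℓ - p.1) * Real.sin θ + p.2 * Real.cos θ + z.2 ≠ 0) :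
    ‖Tmap p - Psi ℓ θ z‖ ^ (-α) ≤
      |(ℓ - p.1) * Real.cos θ - p.2 * Real.sin θ - z.1| ^ (-(α/2)) *
        |(ℓ - p.1) * Real.sin θ + p.2 * Real.cos θ + z.2| ^ (-(α/2)) := by
  set E0 : ℝ := (ℓ - p.1) * Real.cos θ - p.2 * Real.sin θ - z.1 with hE0def
  set E1 : ℝ := (ℓ - p.1) * Real.sin θ + p.2 * Real.cos θ + z.2 with hE1def
  set F : ℝ := ‖Tmap p - Psi ℓ θ z‖ with hF
  have hFnn : 0 ≤ F := norm_nonneg _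
  have hF2 : F ^ 2 = E0 ^ 2 + E1 ^ 2 := by
    rw [hF, norm_Tmap_sub_Psi]
    exact Real.sq_sqrt (by positivity)
  have habs : 0 < |E0| * |E1| := by
    apply mul_pos <;> exact abs_pos.mpr ‹_›
  have hle : |E0| * |E1| ≤ F ^ 2 := by
    rw [hF2]
    nlinarith [sq_nonneg (|E0| - |E1|), sq_abs E0, sq_abs E1, abs_nonneg E0, abs_nonneg E1]
  have hstep : F ^ (-α) = (F ^ 2) ^ (-(α/2)) := by
    rw [← Real.rpow_natCast F 2, ← Real.rpow_mul hFnn]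
    norm_num
    congr 1
    ring
  rw [hstep]
  calc (F ^ 2) ^ (-(α/2)) ≤ (|E0| * |E1|) ^ (-(α/2)) :=
        Real.rpow_le_rpow_of_nonpos habs hle (by linarith)
    _ = |E0| ^ (-(α/2)) * |E1| ^ (-(α/2)) :=
        Real.mul_rpow (abs_nonneg _) (abs_nonneg _)

lemma aux_null_vline (c : ℝ) : (volume : Measure (ℝ × ℝ)) {z : ℝ × ℝ | z.1 = c} = 0 := by
  have : {z : ℝ × ℝ | z.1 = c} = ({c} : Set ℝ) ×ˢ (univ : Set ℝ) := by
    ext z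
    simp only [Set.mem_setOf_eq, Set.mem_prod, Set.mem_singleton_iff, Set.mem_univ, and_true]
  rw [this, Measure.volume_eq_prod, Measure.prod_prod]
  simp

lemma aux_null_hline (c : ℝ) : (volume : Measure (ℝ × ℝ)) {z : ℝ × ℝ | z.2 = c} = 0 := by
  have : {z : ℝ × ℝ | z.2 = c} = (univ : Set ℝ) ×ˢ ({c} : Set ℝ) := by
    ext z
    simp only [Set.mem_setOf_eq, Set.mem_prod, Set.mem_singleton_iff, Set.mem_univ, true_and]
  rw [this, Measure.volume_eq_prod, Measure.prod_prod]
  simp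

set_option maxHeartbeats 2000000

lemma aux_setIntegral_prod_mul_vol (f g : ℝ → ℝ) (s t : Set ℝ) :
    ∫ z in s ×ˢ t, f z.1 * g z.2 = (∫ x in s, f x) * ∫ y in t, g y := by
  rw [Measure.volume_eq_prod]
  exact setIntegral_prod_mul f g s t

/-- Riesz interaction of two rectangles touching at a single vertex, whose bases meet
at an angle `θ ∈ (0,π)`: `R₁` is `[0,ℓ] × [0,d₁]`, and `R₂` has its base of length `ℓ`
starting at the vertex `(ℓ,0)` at angle `θ` with the base of `R₁` and lies on the
opposite side, with height `2d₁`. For `0 < α < 2` there is a constant `C` (depending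
only on `θ`, `ℓ` and `α`) such that
`I(R₁,R₂) = ∫_{R₁}∫_{R₂} |x-y|^{-α} dx dy ≤ C d₁²` for all sufficiently small `d₁ > 0`. -/
theorem rectangle_interaction_quadratic_bound
    (α ℓ θ : ℝ) (hα0 : 0 < α) (hα2 : α < 2) (hℓ : 0 < ℓ)
    (hθ0 : 0 < θ) (hθπ : θ < π) :
    ∃ C > 0, ∃ δ > 0, ∀ d₁ : ℝ, 0 < d₁ → d₁ < δ →
      (∫ x in {p : EuclideanSpace ℝ (Fin 2) |
            ∃ s ∈ Icc (0 : ℝ) ℓ, ∃ t ∈ Icc (0 : ℝ) d₁,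
              p = (WithLp.equiv 2 (Fin 2 → ℝ)).symm ![s, t]},
          ∫ y in {q : EuclideanSpace ℝ (Fin 2) |
            ∃ s ∈ Icc (0 : ℝ) ℓ, ∃ t ∈ Icc (0 : ℝ) (2 * d₁),
              q = (WithLp.equiv 2 (Fin 2 → ℝ)).symm
                ![ℓ - s * Real.cos θ + t * Real.sin θ,
                  -(s * Real.sin θ) - t * Real.cos θ]},
            ‖x - y‖ ^ (-α)) ≤ C * d₁ ^ 2 := by
  have hsin : 0 < Real.sin θ := Real.sin_pos_of_pos_of_lt_pi hθ0 hθπ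
  set q : ℝ := -(α/2) with hqdef
  have hq0 : -1 < q := by rw [hqdef]; linarith
  have hq1 : q < 0 := by rw [hqdef]; linarith
  have hq1' : (0:ℝ) < q + 1 := by rw [hqdef]; linarith
  set U : ℝ := 2 * (ℓ ^ (q+1) / (q+1)) with hUdef
  have hU0 : 0 < U := by
    have := Real.rpow_pos_of_pos hℓ (q+1)
    rw [hUdef]; positivity
  set C : ℝ := 2 * (Real.sin θ / 2) ^ q * U ^ 2
      + U * (2 * (2:ℝ) ^ (q+1) / (q+1)) * (2 / Real.sin θ) + 1 with hCdef
  have hC0 : 0 < C := by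
    have h1 : (0:ℝ) < (Real.sin θ / 2) ^ q := Real.rpow_pos_of_pos (by linarith) q
    have h2 : (0:ℝ) < (2:ℝ) ^ (q+1) := Real.rpow_pos_of_pos (by norm_num) (q+1)
    rw [hCdef]; positivity
  refine ⟨C, hC0, min 1 (ℓ * Real.sin θ / 4), by positivity, ?_⟩
  intro d₁ hd₁ hd₁δ
  have hd1le1 : d₁ ≤ 1 := le_of_lt (lt_of_lt_of_le hd₁δ (min_le_left _ _))
  have hd1sin : d₁ < ℓ * Real.sin θ / 4 := lt_of_lt_of_le hd₁δ (min_le_right _ _)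
  set m : ℝ := ℓ - 2 * d₁ / Real.sin θ with hmdef
  have hKd : 2 * d₁ / Real.sin θ ≤ ℓ / 2 := by
    rw [div_le_div_iff₀ hsin (by norm_num : (0:ℝ) < 2)]
    nlinarith
  have hm0 : 0 ≤ m := by rw [hmdef]; linarith
  have hmℓ : m ≤ ℓ := by
    have : 0 ≤ 2 * d₁ / Real.sin θ := by positivity
    rw [hmdef]; linarith
  -- rewrite the two regions as images of rectangles
  set P₁ : Set (ℝ × ℝ) := Icc (0:ℝ) ℓ ×ˢ Icc (0:ℝ) d₁ with hP₁def
  set P₂ : Set (ℝ × ℝ) := Icc (0:ℝ) ℓ ×ˢ Icc (0:ℝ) (2*d₁) with hP₂def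
  have hS₁ : {p : EuclideanSpace ℝ (Fin 2) |
      ∃ s ∈ Icc (0 : ℝ) ℓ, ∃ t ∈ Icc (0 : ℝ) d₁,
        p = (WithLp.equiv 2 (Fin 2 → ℝ)).symm ![s, t]} = Tmap '' P₁ := by
    ext x
    constructor
    · rintro ⟨s, hs, t, ht, rfl⟩
      exact ⟨(s, t), ⟨hs, ht⟩, rfl⟩
    · rintro ⟨pp, ⟨hs, ht⟩, rfl⟩
      exact ⟨pp.1, hs, pp.2, ht, rfl⟩
  have hS₂ : {q' : EuclideanSpace ℝ (Fin 2) |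
      ∃ s ∈ Icc (0 : ℝ) ℓ, ∃ t ∈ Icc (0 : ℝ) (2 * d₁),
        q' = (WithLp.equiv 2 (Fin 2 → ℝ)).symm
          ![ℓ - s * Real.cos θ + t * Real.sin θ,
            -(s * Real.sin θ) - t * Real.cos θ]} = Psi ℓ θ '' P₂ := by
    ext x
    constructor
    · rintro ⟨s, hs, t, ht, rfl⟩
      exact ⟨(s, t), ⟨hs, ht⟩, (Psi_eq ℓ θ (s, t)).symm ▸ rfl⟩
    · rintro ⟨pp, ⟨hs, ht⟩, rfl⟩
      exact ⟨pp.1, hs, pp.2, ht, by rw [Psi_eq ℓ θ pp]⟩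
  rw [hS₁, hS₂]
  rw [Tmap_mp.setIntegral_image_emb Tmap_emb]
  have hinner_rw : ∀ p : ℝ × ℝ,
      (∫ y in Psi ℓ θ '' P₂, ‖Tmap p - y‖ ^ (-α)) =
        ∫ z in P₂, ‖Tmap p - Psi ℓ θ z‖ ^ (-α) :=
    fun p => (Psi_mp ℓ θ).setIntegral_image_emb (Psi_emb ℓ θ) _ _
  simp only [hinner_rw]
  set G : ℝ × ℝ → ℝ := fun p => ∫ z in P₂, ‖Tmap p - Psi ℓ θ z‖ ^ (-α) with hGdef
  set w₀ : ℝ × ℝ → ℝ := fun p => (ℓ - p.1) * Real.cos θ - p.2 * Real.sin θ with hw₀def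
  set w₁ : ℝ × ℝ → ℝ := fun p => (ℓ - p.1) * Real.sin θ + p.2 * Real.cos θ with hw₁def
  have hGnonneg : ∀ p, 0 ≤ G p := fun p =>
    integral_nonneg fun z => Real.rpow_nonneg (norm_nonneg _) _
  have hP₂meas : MeasurableSet P₂ := (measurableSet_Icc.prod measurableSet_Icc)
  have h2d₁ : (0:ℝ) ≤ 2 * d₁ := by linarith
  -- integrability of the two 1-D marginal majorants
  have hI1 : ∀ w : ℝ, IntegrableOn (fun u => |w - u| ^ q) (Icc (0:ℝ) ℓ) volume :=
    fun w => aux_integrableOn_abs_rpow_sub hq0 hq1 w 0 ℓ hℓ.le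
  have hI2 : ∀ w : ℝ, IntegrableOn (fun v => |w + v| ^ q) (Icc (0:ℝ) (2*d₁)) volume :=
    fun w => aux_integrableOn_abs_rpow_add hq0 hq1 w 0 (2*d₁) h2d₁
  -- global (near) inner bound
  set V : ℝ := 2 * ((2*d₁) ^ (q+1) / (q+1)) with hVdef
  have hV0 : 0 ≤ V := by
    have : (0:ℝ) ≤ (2*d₁) ^ (q+1) := Real.rpow_nonneg h2d₁ _
    rw [hVdef]; positivity
  have hfacu_le : ∀ w : ℝ, ∫ u in Icc (0:ℝ) ℓ, |w - u| ^ q ≤ U := by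
    intro w
    have := aux_setIntegral_abs_rpow_sub_le hq0 hq1 w 0 ℓ hℓ.le
    simpa [hUdef] using this
  have hfacu_nn : ∀ w : ℝ, 0 ≤ ∫ u in Icc (0:ℝ) ℓ, |w - u| ^ q := fun w =>
    setIntegral_nonneg measurableSet_Icc fun x _ => Real.rpow_nonneg (abs_nonneg _) _
  have hfacv_le : ∀ w : ℝ, ∫ v in Icc (0:ℝ) (2*d₁), |w + v| ^ q ≤ V := by
    intro w
    have := aux_setIntegral_abs_rpow_add_le hq0 hq1 w 0 (2*d₁) h2d₁
    simpa [hVdef] using this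
  have hfacv_nn : ∀ w : ℝ, 0 ≤ ∫ v in Icc (0:ℝ) (2*d₁), |w + v| ^ q := fun w =>
    setIntegral_nonneg measurableSet_Icc fun x _ => Real.rpow_nonneg (abs_nonneg _) _
  have hinner_near : ∀ p : ℝ × ℝ, G p ≤
      (∫ u in Icc (0:ℝ) ℓ, |w₀ p - u| ^ q) * ∫ v in Icc (0:ℝ) (2*d₁), |w₁ p + v| ^ q := by
    intro p
    have hmajint : IntegrableOn (fun z : ℝ × ℝ => |w₀ p - z.1| ^ q * |w₁ p + z.2| ^ q)
        P₂ volume := by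
      rw [IntegrableOn, hP₂def, Measure.volume_eq_prod, ← Measure.prod_restrict]
      exact (hI1 (w₀ p)).mul_prod (hI2 (w₁ p))
    have hN : (volume : Measure (ℝ × ℝ))
        ({z : ℝ × ℝ | z.1 = w₀ p} ∪ {z : ℝ × ℝ | z.2 = -(w₁ p)}) = 0 :=
      measure_union_null (aux_null_vline _) (aux_null_hline _)
    have hae : (fun z : ℝ × ℝ => ‖Tmap p - Psi ℓ θ z‖ ^ (-α)) ≤ᵐ[volume.restrict P₂]
        fun z => |w₀ p - z.1| ^ q * |w₁ p + z.2| ^ q := by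
      have h1 : ∀ᵐ z : ℝ × ℝ ∂(volume.restrict P₂),
          z ∉ ({z : ℝ × ℝ | z.1 = w₀ p} ∪ {z : ℝ × ℝ | z.2 = -(w₁ p)}) :=
        ae_restrict_of_ae (compl_mem_ae_iff.mpr hN)
      filter_upwards [h1] with z hz
      rw [Set.mem_union, not_or] at hz
      obtain ⟨hz1, hz2⟩ := hz
      have hE0 : (ℓ - p.1) * Real.cos θ - p.2 * Real.sin θ - z.1 ≠ 0 := by
        intro h
        exact hz1 (by simp only [Set.mem_setOf_eq]; simp only [hw₀def]; linarith [sub_eq_zero.mp h])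
      have hE1 : (ℓ - p.1) * Real.sin θ + p.2 * Real.cos θ + z.2 ≠ 0 := by
        intro h
        exact hz2 (by simp only [Set.mem_setOf_eq]; simp only [hw₁def]; linarith)
      have := aux_ptwise α ℓ θ hα0 p z hE0 hE1
      simpa [hqdef, hw₀def, hw₁def] using this
    have := integral_mono_of_nonneg
      (ae_of_all _ fun z => Real.rpow_nonneg (norm_nonneg _) _) hmajint hae
    calc G p ≤ ∫ z in P₂, |w₀ p - z.1| ^ q * |w₁ p + z.2| ^ q := this
      _ = (∫ u in Icc (0:ℝ) ℓ, |w₀ p - u| ^ q) *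
          ∫ v in Icc (0:ℝ) (2*d₁), |w₁ p + v| ^ q := by
        rw [hP₂def]
        exact aux_setIntegral_prod_mul_vol (fun u => |w₀ p - u| ^ q)
          (fun v => |w₁ p + v| ^ q) _ _
  have hGbdd : ∀ p : ℝ × ℝ, G p ≤ U * V := fun p =>
    le_trans (hinner_near p)
      (mul_le_mul (hfacu_le _) (hfacv_le _) (hfacv_nn _) hU0.le)
  -- far inner bound
  set Kfar : ℝ := U * (Real.sin θ / 2) ^ q * (2 * d₁) with hKfardef
  have hKfar0 : 0 ≤ Kfar := by
    have : (0:ℝ) < (Real.sin θ / 2) ^ q := Real.rpow_pos_of_pos (by linarith) q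
    rw [hKfardef]; positivity
  have hinner_far : ∀ p : ℝ × ℝ, p.2 ∈ Icc (0:ℝ) d₁ → p.1 ∈ Icc (0:ℝ) m →
      G p ≤ Kfar * |ℓ - p.1| ^ q := by
    intro p hp2 hp1
    have ha : 2 * d₁ / Real.sin θ ≤ ℓ - p.1 := by
      have := hp1.2
      rw [hmdef] at this
      linarith
    have ha0 : 0 < ℓ - p.1 := lt_of_lt_of_le (by positivity) ha
    have hconst : 0 < Real.sin θ / 2 * (ℓ - p.1) := by positivity
    -- lower bound for E1 on P₂
    have hE1low : ∀ z : ℝ × ℝ, z ∈ P₂ → Real.sin θ / 2 * (ℓ - p.1) ≤ w₁ p + z.2 := by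
      intro z hz
      have hz2 : 0 ≤ z.2 := (hz.2).1
      have hp2a : 0 ≤ p.2 := hp2.1
      have hp2b : p.2 ≤ d₁ := hp2.2
      have hcos : -1 ≤ Real.cos θ := Real.neg_one_le_cos θ
      have h1 : p.2 * Real.cos θ ≥ -d₁ := by nlinarith
      have h2 : 2 * d₁ ≤ (ℓ - p.1) * Real.sin θ := by
        rw [div_le_iff₀ hsin] at ha
        linarith [ha]
      simp only [hw₁def]
      nlinarith
    have hmajint : IntegrableOn
        (fun z : ℝ × ℝ => |w₀ p - z.1| ^ q * (Real.sin θ / 2 * (ℓ - p.1)) ^ q)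
        P₂ volume := by
      rw [IntegrableOn, hP₂def, Measure.volume_eq_prod, ← Measure.prod_restrict]
      exact (hI1 (w₀ p)).mul_prod (integrableOn_const measure_Icc_lt_top.ne)
    have hae : (fun z : ℝ × ℝ => ‖Tmap p - Psi ℓ θ z‖ ^ (-α)) ≤ᵐ[volume.restrict P₂]
        fun z => |w₀ p - z.1| ^ q * (Real.sin θ / 2 * (ℓ - p.1)) ^ q := by
      have h1 : ∀ᵐ z : ℝ × ℝ ∂(volume.restrict P₂),
          z ∉ ({z : ℝ × ℝ | z.1 = w₀ p} : Set (ℝ × ℝ)) :=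
        ae_restrict_of_ae (compl_mem_ae_iff.mpr (aux_null_vline _))
      filter_upwards [h1, ae_restrict_mem hP₂meas] with z hz1 hzmem
      have hE1pos : 0 < w₁ p + z.2 := lt_of_lt_of_le hconst (hE1low z hzmem)
      have hE0 : (ℓ - p.1) * Real.cos θ - p.2 * Real.sin θ - z.1 ≠ 0 := by
        intro h
        exact hz1 (by show z.1 = w₀ p; simp only [hw₀def]; linarith [sub_eq_zero.mp h])
      have hE1 : (ℓ - p.1) * Real.sin θ + p.2 * Real.cos θ + z.2 ≠ 0 := by
        have h' : w₁ p + z.2 ≠ 0 := ne_of_gt hE1pos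
        simp only [hw₁def] at h'
        exact h'
      have hpt := aux_ptwise α ℓ θ hα0 p z hE0 hE1
      have hfac : |(ℓ - p.1) * Real.sin θ + p.2 * Real.cos θ + z.2| ^ (-(α/2)) ≤
          (Real.sin θ / 2 * (ℓ - p.1)) ^ (-(α/2)) := by
        have habs : |(ℓ - p.1) * Real.sin θ + p.2 * Real.cos θ + z.2| =
            (ℓ - p.1) * Real.sin θ + p.2 * Real.cos θ + z.2 := by
          apply abs_of_pos
          have h' := hE1pos
          simp only [hw₁def] at h'
          exact h'
        rw [habs]
        apply Real.rpow_le_rpow_of_nonpos hconst _ (by linarith)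
        have h' := hE1low z hzmem
        simp only [hw₁def] at h'
        exact h'
      calc ‖Tmap p - Psi ℓ θ z‖ ^ (-α)
          ≤ |(ℓ - p.1) * Real.cos θ - p.2 * Real.sin θ - z.1| ^ (-(α/2)) *
            |(ℓ - p.1) * Real.sin θ + p.2 * Real.cos θ + z.2| ^ (-(α/2)) := hpt
        _ ≤ |(ℓ - p.1) * Real.cos θ - p.2 * Real.sin θ - z.1| ^ (-(α/2)) *
            (Real.sin θ / 2 * (ℓ - p.1)) ^ (-(α/2)) := by
            apply mul_le_mul_of_nonneg_left hfac (Real.rpow_nonneg (abs_nonneg _) _)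
        _ = |w₀ p - z.1| ^ q * (Real.sin θ / 2 * (ℓ - p.1)) ^ q := by
            rw [hqdef, hw₀def]
    have hmono := integral_mono_of_nonneg
      (ae_of_all _ fun z => Real.rpow_nonneg (norm_nonneg _) _) hmajint hae
    have hval : ∫ z in P₂, |w₀ p - z.1| ^ q * (Real.sin θ / 2 * (ℓ - p.1)) ^ q
        = (∫ u in Icc (0:ℝ) ℓ, |w₀ p - u| ^ q) *
          ((Real.sin θ / 2 * (ℓ - p.1)) ^ q * (2 * d₁)) := by
      rw [hP₂def]
      have := aux_setIntegral_prod_mul_vol (fun u => |w₀ p - u| ^ q)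
        (fun _ => (Real.sin θ / 2 * (ℓ - p.1)) ^ q) (Icc 0 ℓ) (Icc 0 (2*d₁))
      rw [this, setIntegral_const]
      rw [Real.volume_real_Icc_of_le (by linarith)]
      rw [smul_eq_mul]
      ring
    have hsplitpow : (Real.sin θ / 2 * (ℓ - p.1)) ^ q =
        (Real.sin θ / 2) ^ q * |ℓ - p.1| ^ q := by
      rw [abs_of_pos ha0]
      exact Real.mul_rpow (by linarith) ha0.le
    calc G p ≤ ∫ z in P₂, |w₀ p - z.1| ^ q * (Real.sin θ / 2 * (ℓ - p.1)) ^ q := hmono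
      _ = (∫ u in Icc (0:ℝ) ℓ, |w₀ p - u| ^ q) *
          ((Real.sin θ / 2 * (ℓ - p.1)) ^ q * (2 * d₁)) := hval
      _ ≤ U * ((Real.sin θ / 2 * (ℓ - p.1)) ^ q * (2 * d₁)) := by
          apply mul_le_mul_of_nonneg_right (hfacu_le _)
          have : (0:ℝ) ≤ (Real.sin θ / 2 * (ℓ - p.1)) ^ q := Real.rpow_nonneg hconst.le _
          positivity
      _ = Kfar * |ℓ - p.1| ^ q := by
          rw [hsplitpow, hKfardef]; ring
  -- measurability and integrability of G
  have hjoint : Measurable (fun pz : (ℝ × ℝ) × (ℝ × ℝ) =>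
      ‖Tmap pz.1 - Psi ℓ θ pz.2‖ ^ (-α)) := by
    have h1 : Measurable fun pz : (ℝ × ℝ) × (ℝ × ℝ) => ‖Tmap pz.1 - Psi ℓ θ pz.2‖ :=
      ((Tmap_mp.measurable.comp measurable_fst).sub
        ((Psi_mp ℓ θ).measurable.comp measurable_snd)).norm
    have h2 : Measurable fun x : ℝ => x ^ (-α) := by measurability
    exact h2.comp h1
  have hGsm : StronglyMeasurable G :=
    (hjoint.stronglyMeasurable).integral_prod_right'
  have hvolP₁ : volume P₁ < ⊤ := by
    rw [hP₁def, Measure.volume_eq_prod, Measure.prod_prod]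
    exact ENNReal.mul_lt_top measure_Icc_lt_top measure_Icc_lt_top
  have hGint : IntegrableOn G P₁ volume := by
    have hconst : IntegrableOn (fun _ : ℝ × ℝ => U * V) P₁ volume :=
      integrableOn_const hvolP₁.ne
    refine Integrable.mono' hconst hGsm.aestronglyMeasurable (ae_of_all _ fun p => ?_)
    rw [Real.norm_eq_abs, abs_of_nonneg (hGnonneg p)]
    exact hGbdd p
  -- split the outer region
  set Far : Set (ℝ × ℝ) := Icc (0:ℝ) m ×ˢ Icc (0:ℝ) d₁ with hFardef
  set Near : Set (ℝ × ℝ) := Ioc m ℓ ×ˢ Icc (0:ℝ) d₁ with hNeardef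
  have hPsplit : P₁ = Far ∪ Near := by
    rw [hP₁def, hFardef, hNeardef, ← Set.union_prod, Set.Icc_union_Ioc_eq_Icc hm0 hmℓ]
  have hdisj : Disjoint Far Near := by
    rw [Set.disjoint_left]
    rintro z ⟨hz1, _⟩ ⟨hz1', _⟩
    exact absurd hz1.2 (not_le.mpr hz1'.1)
  have hNearMeas : MeasurableSet Near := measurableSet_Ioc.prod measurableSet_Icc
  have hsplit_int : ∫ p in P₁, G p = (∫ p in Far, G p) + ∫ p in Near, G p := by
    rw [hPsplit]
    exact setIntegral_union hdisj hNearMeas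
      (hGint.mono_set (by rw [hPsplit]; exact subset_union_left))
      (hGint.mono_set (by rw [hPsplit]; exact subset_union_right))
  -- far piece
  have hintfar1 : Integrable (fun u : ℝ => Kfar * |ℓ - u| ^ q)
      (volume.restrict (Icc (0:ℝ) m)) :=
    ((aux_integrableOn_abs_rpow_sub hq0 hq1 ℓ 0 m hm0)).const_mul Kfar
  have hfar_bound : ∫ p in Far, G p ≤ Kfar * U * d₁ := by
    have hmajint : IntegrableOn (fun p : ℝ × ℝ => Kfar * |ℓ - p.1| ^ q) Far volume := by
      rw [IntegrableOn, hFardef, Measure.volume_eq_prod, ← Measure.prod_restrict]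
      have h2 : Integrable (fun _ : ℝ => (1:ℝ)) (volume.restrict (Icc (0:ℝ) d₁)) :=
        integrableOn_const measure_Icc_lt_top.ne
      have := hintfar1.mul_prod h2
      simpa using this
    have hFarMeas : MeasurableSet Far := measurableSet_Icc.prod measurableSet_Icc
    have hmono : ∫ p in Far, G p ≤ ∫ p in Far, Kfar * |ℓ - p.1| ^ q := by
      apply integral_mono_of_nonneg (ae_of_all _ hGnonneg) hmajint
      filter_upwards [ae_restrict_mem hFarMeas] with p hp
      exact hinner_far p hp.2 hp.1
    have hval : ∫ p in Far, Kfar * |ℓ - p.1| ^ q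
        = (∫ u in Icc (0:ℝ) m, Kfar * |ℓ - u| ^ q) * d₁ := by
      rw [hFardef]
      have h := aux_setIntegral_prod_mul_vol (fun u => Kfar * |ℓ - u| ^ q)
        (fun _ => (1:ℝ)) (Icc 0 m) (Icc 0 d₁)
      simp only [mul_one] at h
      rw [h, setIntegral_const, Real.volume_real_Icc_of_le hd₁.le, smul_eq_mul]
      ring
    have hintval : (∫ u in Icc (0:ℝ) m, Kfar * |ℓ - u| ^ q) ≤ Kfar * U := by
      rw [MeasureTheory.integral_const_mul]
      apply mul_le_mul_of_nonneg_left _ hKfar0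
      calc ∫ u in Icc (0:ℝ) m, |ℓ - u| ^ q ≤ 2 * ((m - 0) ^ (q+1) / (q+1)) :=
            aux_setIntegral_abs_rpow_sub_le hq0 hq1 ℓ 0 m hm0
        _ ≤ U := by
            rw [hUdef, sub_zero]
            have : m ^ (q+1) ≤ ℓ ^ (q+1) := Real.rpow_le_rpow hm0 hmℓ hq1'.le
            gcongr
    calc ∫ p in Far, G p ≤ ∫ p in Far, Kfar * |ℓ - p.1| ^ q := hmono
      _ = (∫ u in Icc (0:ℝ) m, Kfar * |ℓ - u| ^ q) * d₁ := hval
      _ ≤ (Kfar * U) * d₁ := by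
          apply mul_le_mul_of_nonneg_right hintval hd₁.le
      _ = Kfar * U * d₁ := by ring
  -- near piece
  have hnear_bound : ∫ p in Near, G p ≤ (U * V) * ((ℓ - m) * d₁) := by
    have hvolNear : volume Near = ENNReal.ofReal (ℓ - m) * ENNReal.ofReal d₁ := by
      rw [hNeardef, Measure.volume_eq_prod, Measure.prod_prod, Real.volume_Ioc,
        Real.volume_Icc, sub_zero]
    have hmono : ∫ p in Near, G p ≤ ∫ _p in Near, U * V := by
      apply integral_mono_of_nonneg (ae_of_all _ hGnonneg)
      · refine integrableOn_const (ne_of_lt ?_)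
        rw [hvolNear]
        exact ENNReal.mul_lt_top ENNReal.ofReal_lt_top ENNReal.ofReal_lt_top
      · exact ae_of_all _ fun p => hGbdd p
    rw [setIntegral_const, measureReal_def, hvolNear, ENNReal.toReal_mul,
      ENNReal.toReal_ofReal (by linarith : (0:ℝ) ≤ ℓ - m),
      ENNReal.toReal_ofReal hd₁.le, smul_eq_mul] at hmono
    calc ∫ p in Near, G p ≤ (ℓ - m) * d₁ * (U * V) := hmono
      _ = (U * V) * ((ℓ - m) * d₁) := by ring
  -- combine
  rw [hsplit_int]
  have hKfarval : Kfar * U * d₁ = 2 * (Real.sin θ / 2) ^ q * U ^ 2 * d₁ ^ 2 := by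
    rw [hKfardef]; ring
  have hVle : V ≤ 2 * (2:ℝ) ^ (q+1) / (q+1) := by
    rw [hVdef]
    have h1 : (2*d₁) ^ (q+1) = (2:ℝ) ^ (q+1) * d₁ ^ (q+1) :=
      Real.mul_rpow (by norm_num) hd₁.le
    have h2 : d₁ ^ (q+1) ≤ 1 := Real.rpow_le_one hd₁.le hd1le1 hq1'.le
    have h3 : (0:ℝ) < (2:ℝ) ^ (q+1) := Real.rpow_pos_of_pos (by norm_num) _
    calc 2 * ((2*d₁) ^ (q+1) / (q+1)) = 2 * (((2:ℝ) ^ (q+1) * d₁ ^ (q+1)) / (q+1)) := by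
          rw [h1]
      _ ≤ 2 * (((2:ℝ) ^ (q+1)) / (q+1)) := by
          gcongr
          nlinarith
      _ = 2 * (2:ℝ) ^ (q+1) / (q+1) := by ring
  have hlm : ℓ - m = 2 * d₁ / Real.sin θ := by rw [hmdef]; ring
  have hnear_final : (U * V) * ((ℓ - m) * d₁) ≤
      U * (2 * (2:ℝ) ^ (q+1) / (q+1)) * (2 / Real.sin θ) * d₁ ^ 2 := by
    rw [hlm]
    have heq : U * V * (2 * d₁ / Real.sin θ * d₁) = U * V * (2 / Real.sin θ) * d₁ ^ 2 := by
      ring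
    rw [heq]
    have h2sin : (0:ℝ) ≤ 2 / Real.sin θ := by positivity
    have hd2 : (0:ℝ) ≤ d₁ ^ 2 := sq_nonneg _
    have hUV : U * V ≤ U * (2 * (2:ℝ) ^ (q+1) / (q+1)) :=
      mul_le_mul_of_nonneg_left hVle hU0.le
    calc U * V * (2 / Real.sin θ) * d₁ ^ 2 = (U * V) * ((2 / Real.sin θ) * d₁ ^ 2) := by ring
      _ ≤ (U * (2 * (2:ℝ) ^ (q+1) / (q+1))) * ((2 / Real.sin θ) * d₁ ^ 2) :=
          mul_le_mul_of_nonneg_right hUV (by positivity)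
      _ = U * (2 * (2:ℝ) ^ (q+1) / (q+1)) * (2 / Real.sin θ) * d₁ ^ 2 := by ring
  have hfinal : Kfar * U * d₁ + (U * V) * ((ℓ - m) * d₁) ≤ C * d₁ ^ 2 := by
    have hexpand : C * d₁ ^ 2 = 2 * (Real.sin θ / 2) ^ q * U ^ 2 * d₁ ^ 2
        + U * (2 * (2:ℝ) ^ (q+1) / (q+1)) * (2 / Real.sin θ) * d₁ ^ 2 + d₁ ^ 2 := by
      rw [hCdef]; ring
    rw [hKfarval, hexpand]
    have hd2 : (0:ℝ) ≤ d₁ ^ 2 := sq_nonneg _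
    linarith [hnear_final]
  calc (∫ p in Far, G p) + ∫ p in Near, G p
      ≤ Kfar * U * d₁ + (U * V) * ((ℓ - m) * d₁) := add_le_add hfar_bound hnear_bound
    _ ≤ C * d₁ ^ 2 := hfinal
end

section
/- For points x = (x_1,x_2) in the rectangle [0,ℓ]×[0,d_1] and y = (y_1,y_2) in a second rectangle whose base starts at (ℓ,0) making an angle θ ∈ (0,π) with the first base (parametrized by base coordinate y_1 ∈ [0,ℓ] and height y_2 ∈ [0,2d_1]), the Euclidean distance satisfies |x−y| ≥ sqrt((1−cosθ)/2)·(ℓ − x_1 + y_1). -/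
open Real Set

/-- Distance lower bound for two rectangles meeting at a vertex with interior angle
`θ ∈ (0,π)` between their bases. The first rectangle is `[0,ℓ] × [0,d₁]`; the second one
has its base of length `ℓ` starting at `(ℓ,0)` at angle `θ` with the first base and lies
on the opposite side, with height coordinate `y₂ ∈ [0, 2d₁]`. For `x = (x₁,x₂)` in the
first rectangle and `y` in the second (in base/height coordinates `(y₁,y₂)`), one has
`|x - y| ≥ √((1-cos θ)/2) · (ℓ - x₁ + y₁)`. -/
theorem rectangle_distance_lower_bound
    (ℓ d₁ θ : ℝ) (hℓ : 0 < ℓ) (hd₁ : 0 < d₁) (hθ0 : 0 < θ) (hθπ : θ < π)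
    (x₁ x₂ y₁ y₂ : ℝ)
    (hx₁ : x₁ ∈ Icc 0 ℓ) (hx₂ : x₂ ∈ Icc 0 d₁)
    (hy₁ : y₁ ∈ Icc 0 ℓ) (hy₂ : y₂ ∈ Icc 0 (2 * d₁)) :
    Real.sqrt ((1 - Real.cos θ) / 2) * (ℓ - x₁ + y₁) ≤
      dist ((WithLp.equiv 2 (Fin 2 → ℝ)).symm ![x₁, x₂] : EuclideanSpace ℝ (Fin 2))
        ((WithLp.equiv 2 (Fin 2 → ℝ)).symm
          ![ℓ - y₁ * Real.cos θ + y₂ * Real.sin θ,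
            -(y₁ * Real.sin θ) - y₂ * Real.cos θ]) := by
  obtain ⟨hx₁0, hx₁ℓ⟩ := hx₁
  obtain ⟨hx₂0, _⟩ := hx₂
  obtain ⟨hy₁0, _⟩ := hy₁
  obtain ⟨hy₂0, _⟩ := hy₂
  have hc1 : Real.cos θ ≤ 1 := Real.cos_le_one θ
  have hc2 : -1 ≤ Real.cos θ := Real.neg_one_le_cos θ
  have hs : 0 ≤ Real.sin θ := Real.sin_nonneg_of_nonneg_of_le_pi hθ0.le hθπ.le
  have hpyth : Real.sin θ ^ 2 + Real.cos θ ^ 2 = 1 := Real.sin_sq_add_cos_sq θ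
  have hB : 0 ≤ ℓ - x₁ + y₁ := by linarith
  have hA : 0 ≤ (1 - Real.cos θ) / 2 := by linarith
  rw [EuclideanSpace.dist_eq]
  simp only [WithLp.equiv_symm_apply, WithLp.ofLp_toLp, Fin.sum_univ_two, Matrix.cons_val_zero,
    Matrix.cons_val_one, Matrix.head_cons, Real.dist_eq]
  rw [show Real.sqrt ((1 - Real.cos θ) / 2) * (ℓ - x₁ + y₁)
      = Real.sqrt ((1 - Real.cos θ) / 2 * (ℓ - x₁ + y₁) ^ 2) by
    rw [Real.sqrt_mul hA, Real.sqrt_sq hB]]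
  apply Real.sqrt_le_sqrt
  rw [sq_abs, sq_abs]
  have key : (x₁ - (ℓ - y₁ * Real.cos θ + y₂ * Real.sin θ)) ^ 2
      + (x₂ - (-(y₁ * Real.sin θ) - y₂ * Real.cos θ)) ^ 2
      - (1 - Real.cos θ) / 2 * (ℓ - x₁ + y₁) ^ 2
      = (1 + Real.cos θ) / 2 * ((ℓ - x₁) - y₁) ^ 2 + (x₂ - y₂) ^ 2
        + 2 * (x₂ * y₂) * (1 + Real.cos θ)
        + 2 * ((ℓ - x₁) * y₂) * Real.sin θ + 2 * (x₂ * y₁) * Real.sin θ := by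
    linear_combination (y₁ ^ 2 + y₂ ^ 2) * hpyth
  nlinarith [sq_nonneg ((ℓ - x₁) - y₁), sq_nonneg (x₂ - y₂),
    mul_nonneg (mul_nonneg hx₂0 hy₂0) (by linarith : (0:ℝ) ≤ 1 + Real.cos θ),
    mul_nonneg (mul_nonneg (by linarith : (0:ℝ) ≤ ℓ - x₁) hy₂0) hs,
    mul_nonneg (mul_nonneg hx₂0 hy₁0) hs,
    mul_nonneg (by linarith : (0:ℝ) ≤ 1 + Real.cos θ) (sq_nonneg ((ℓ - x₁) - y₁))]
end

section
/- Let E ⊂ R^2 be a local minimizer of E_γ = P_ψ + γV among sets of the same measure within L^1-distance δ_0 (up to translation). Then E is an ω-minimizer of the anisotropic perimeter P_ψ with ω = max{2c_{α,2} γ |E|^{1−α/2}, P_ψ(E)/δ_0}: for every set of finite perimeter F with |F| = |E|, P_ψ(E) ≤ P_ψ(F) + ω|E Δ F|. -/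
open MeasureTheory Set Metric
open scoped symmDiff Pointwise

open scoped ENNReal

lemma riesz_bound {α : ℝ} (hα0 : 0 < α) (hα2 : α < 2)
    (A : Set (EuclideanSpace ℝ (Fin 2))) (hAfin : volume A ≠ ⊤)
    (x : EuclideanSpace ℝ (Fin 2)) :
    ∫⁻ y in A, ENNReal.ofReal (‖x - y‖ ^ (-α)) ≤
      ENNReal.ofReal (2 * (volume (ball (0 : EuclideanSpace ℝ (Fin 2)) 1)).toReal ^ (α / 2)
        / (2 - α) * (volume A).toReal ^ (1 - α / 2)) := by
  rcases eq_or_ne (volume A) 0 with h0 | h0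
  · rw [Measure.restrict_eq_zero.mpr h0, lintegral_zero_measure]
    exact zero_le
  set B := volume (ball (0 : EuclideanSpace ℝ (Fin 2)) 1) with hB
  set π : ℝ := B.toReal with hπdef
  have hπ : 0 < π := ENNReal.toReal_pos (measure_ball_pos _ _ one_pos).ne' measure_ball_lt_top.ne
  set m : ℝ := (volume A).toReal with hmdef
  have hm : 0 < m := ENNReal.toReal_pos h0 hAfin
  set T : ℝ := (π / m) ^ (α / 2) with hTdef
  have hT : 0 < T := Real.rpow_pos_of_pos (div_pos hπ hm) _
  set p : ℝ := -(2 / α) with hpdef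
  have hp : p < -1 := by
    rw [hpdef, neg_lt_neg_iff]
    rw [lt_div_iff₀ hα0]; linarith
  -- layer cake
  have hmeas : AEMeasurable (fun y : EuclideanSpace ℝ (Fin 2) => ‖x - y‖ ^ (-α))
      ((volume : Measure (EuclideanSpace ℝ (Fin 2))).restrict A) := by fun_prop
  rw [lintegral_eq_lintegral_meas_le _
    (Filter.Eventually.of_forall fun y => Real.rpow_nonneg (norm_nonneg _) _) hmeas]
  have key : ∀ t ∈ Ioi (0:ℝ),
      (volume.restrict A) {y : EuclideanSpace ℝ (Fin 2) | t ≤ ‖x - y‖ ^ (-α)}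
        ≤ min (volume A) (ENNReal.ofReal (t ^ p) * B) := by
    intro t ht
    refine le_min ?_ ?_
    · exact le_trans (measure_mono (subset_univ _)) (by rw [Measure.restrict_apply_univ])
    · refine le_trans (Measure.restrict_le_self _) ?_
      have hsub : {y : EuclideanSpace ℝ (Fin 2) | t ≤ ‖x - y‖ ^ (-α)} ⊆
          closedBall x (t ^ (-α⁻¹)) := by
        intro y hy
        simp only [mem_setOf_eq] at hy
        have hs : 0 < ‖x - y‖ := by
          rcases eq_or_lt_of_le (norm_nonneg (x - y)) with h | h
          · exfalso
            rw [← h, Real.zero_rpow (neg_ne_zero.mpr hα0.ne')] at hy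
            exact absurd (lt_of_lt_of_le ht hy) (lt_irrefl 0)
          · exact h
        have h1 : (‖x - y‖ ^ (-α)) ^ (-α⁻¹) ≤ t ^ (-α⁻¹) :=
          Real.rpow_le_rpow_of_nonpos ht hy (neg_nonpos.mpr (inv_nonneg.mpr hα0.le))
        have h2 : (‖x - y‖ ^ (-α)) ^ (-α⁻¹) = ‖x - y‖ := by
          rw [← Real.rpow_mul hs.le, neg_mul_neg, mul_inv_cancel₀ hα0.ne', Real.rpow_one]
        rw [mem_closedBall, dist_eq_norm, ← norm_sub_rev]
        rw [h2] at h1; exact h1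
      refine le_trans (measure_mono hsub) ?_
      rw [Measure.addHaar_closedBall _ _ (Real.rpow_nonneg (le_of_lt ht) _)]
      rw [finrank_euclideanSpace_fin]
      refine mul_le_mul_left (ENNReal.ofReal_le_ofReal ?_) _
      rw [← Real.rpow_natCast (t ^ (-α⁻¹)) 2, ← Real.rpow_mul ht.le]
      apply le_of_eq
      congr 1
      rw [hpdef]
      push_cast
      field_simp
  have hα2' : (0:ℝ) < 2 - α := by linarith
  have hp1 : p + 1 = (α - 2) / α := by rw [hpdef]; field_simp; ring
  have hp1neg : p + 1 < 0 := by linarith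
  calc ∫⁻ t in Ioi (0:ℝ), (volume.restrict A) {y : EuclideanSpace ℝ (Fin 2) | t ≤ ‖x - y‖ ^ (-α)}
      ≤ ∫⁻ t in Ioi (0:ℝ), min (volume A) (ENNReal.ofReal (t ^ p) * B) :=
        setLIntegral_mono' measurableSet_Ioi key
    _ ≤ ∫⁻ t in Ioc 0 T ∪ Ioi T, min (volume A) (ENNReal.ofReal (t ^ p) * B) :=
        lintegral_mono_set Ioi_subset_Ioc_union_Ioi
    _ ≤ (∫⁻ t in Ioc 0 T, min (volume A) (ENNReal.ofReal (t ^ p) * B))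
        + ∫⁻ t in Ioi T, min (volume A) (ENNReal.ofReal (t ^ p) * B) :=
        lintegral_union_le _ _ _
    _ ≤ volume A * ENNReal.ofReal T
        + ENNReal.ofReal (-T ^ (p + 1) / (p + 1)) * B := by
        gcongr
        · calc ∫⁻ t in Ioc 0 T, min (volume A) (ENNReal.ofReal (t ^ p) * B)
              ≤ ∫⁻ _ in Ioc (0:ℝ) T, volume A := lintegral_mono fun t => min_le_left _ _
            _ = volume A * ENNReal.ofReal T := by
                rw [setLIntegral_const, Real.volume_Ioc, sub_zero]
        · calc ∫⁻ t in Ioi T, min (volume A) (ENNReal.ofReal (t ^ p) * B)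
              ≤ ∫⁻ t in Ioi T, ENNReal.ofReal (t ^ p) * B :=
                lintegral_mono fun t => min_le_right _ _
            _ = (∫⁻ t in Ioi T, ENNReal.ofReal (t ^ p)) * B := by
                rw [lintegral_mul_const]
                fun_prop
            _ = ENNReal.ofReal (-T ^ (p + 1) / (p + 1)) * B := by
                congr 1
                rw [← ofReal_integral_eq_lintegral_ofReal
                  (integrableOn_Ioi_rpow_of_lt hp hT) ?_]
                · rw [integral_Ioi_rpow_of_lt hp hT]
                · filter_upwards [ae_restrict_mem measurableSet_Ioi] with t ht
                  exact Real.rpow_nonneg (le_of_lt (hT.trans ht)) _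
    _ ≤ ENNReal.ofReal (2 * π ^ (α / 2) / (2 - α) * m ^ (1 - α / 2)) := by
        have hBo : B = ENNReal.ofReal π := (ENNReal.ofReal_toReal measure_ball_lt_top.ne).symm
        have hAo : volume A = ENNReal.ofReal m := (ENNReal.ofReal_toReal hAfin).symm
        have hInn : 0 ≤ -T ^ (p + 1) / (p + 1) :=
          (div_pos_of_neg_of_neg (neg_neg_iff_pos.mpr (Real.rpow_pos_of_pos hT _)) hp1neg).le
        rw [hBo, hAo, ← ENNReal.ofReal_mul hm.le, ← ENNReal.ofReal_mul hInn,
          ← ENNReal.ofReal_add (by positivity) (by positivity)]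
        apply ENNReal.ofReal_le_ofReal
        apply le_of_eq
        -- real computation
        have hT1 : T ^ (p + 1) = (π / m) ^ ((α - 2) / 2) := by
          rw [hTdef, ← Real.rpow_mul (div_pos hπ hm).le]
          congr 1
          rw [hp1]; field_simp
        have hdiv : (π / m) ^ ((α - 2) / 2) * π = π ^ (α / 2) * m ^ (1 - α / 2) := by
          have h1 : π ^ ((α - 2) / 2) * π = π ^ (α / 2) := by
            rw [← Real.rpow_add_one hπ.ne']; congr 1; ring
          have h2 : m ^ ((α - 2) / 2) * m ^ (1 - α / 2) = 1 := by
            rw [← Real.rpow_add hm, show (α - 2) / 2 + (1 - α / 2) = 0 by ring, Real.rpow_zero]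
          rw [Real.div_rpow hπ.le hm.le]
          have hbne : m ^ ((α - 2) / 2) ≠ 0 := (Real.rpow_pos_of_pos hm _).ne'
          rw [div_mul_eq_mul_div, h1, div_eq_iff hbne, mul_assoc,
            mul_comm (m ^ (1 - α / 2)), h2, mul_one]
        have e1 : m * T = π ^ (α / 2) * m ^ (1 - α / 2) := by
          rw [hTdef, Real.div_rpow hπ.le hm.le,
            show (1:ℝ) - α / 2 = 1 - α / 2 from rfl]
          rw [show m ^ ((1:ℝ) - α / 2) = m ^ (1:ℝ) / m ^ (α/2) from Real.rpow_sub hm 1 (α/2),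
            Real.rpow_one]
          field_simp
        have e2 : -T ^ (p + 1) / (p + 1) * π = π ^ (α / 2) * m ^ (1 - α / 2) * (α / (2 - α)) := by
          rw [hT1, hp1]
          have h3 : -(π / m) ^ ((α - 2) / 2) / ((α - 2) / α) * π
              = ((π / m) ^ ((α - 2) / 2) * π) * (α / (2 - α)) := by
            field_simp [hα0.ne', hα2'.ne', sub_ne_zero.mpr hα2.ne]
            ring
          rw [h3, hdiv]
        rw [e1, e2]
        field_simp
        ring

local notation "X2" => EuclideanSpace ℝ (Fin 2)

lemma kern_meas (α : ℝ) :
    Measurable (fun p : X2 × X2 => ENNReal.ofReal (‖p.1 - p.2‖ ^ (-α))) := by fun_prop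

lemma inner_meas (α : ℝ) (B : Set X2) :
    Measurable (fun x : X2 => ∫⁻ y in B, ENNReal.ofReal (‖x - y‖ ^ (-α))) :=
  Measurable.lintegral_prod_right' (f := fun p : X2 × X2 => ENNReal.ofReal (‖p.1 - p.2‖ ^ (-α)))
    (kern_meas α)

lemma double_eq (α : ℝ) (A : Set X2)
    (hbd : ∀ x, ∫⁻ y in A, ENNReal.ofReal (‖x - y‖ ^ (-α)) ≠ ⊤) :
    ∫ x in A, ∫ y in A, ‖x - y‖ ^ (-α)
      = (∫⁻ x in A, ∫⁻ y in A, ENNReal.ofReal (‖x - y‖ ^ (-α))).toReal := by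
  have hinner : ∀ x : X2, ∫ y in A, ‖x - y‖ ^ (-α)
      = (∫⁻ y in A, ENNReal.ofReal (‖x - y‖ ^ (-α))).toReal := by
    intro x
    rw [integral_eq_lintegral_of_nonneg_ae
      (Filter.Eventually.of_forall fun y => Real.rpow_nonneg (norm_nonneg _) _)
      (Measurable.aestronglyMeasurable (by fun_prop))]
  calc ∫ x in A, ∫ y in A, ‖x - y‖ ^ (-α)
      = ∫ x in A, (∫⁻ y in A, ENNReal.ofReal (‖x - y‖ ^ (-α))).toReal := by
        simp_rw [hinner]
    _ = (∫⁻ x in A, ENNReal.ofReal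
          ((∫⁻ y in A, ENNReal.ofReal (‖x - y‖ ^ (-α))).toReal)).toReal := by
        rw [integral_eq_lintegral_of_nonneg_ae
          (Filter.Eventually.of_forall fun x => ENNReal.toReal_nonneg)
          ((inner_meas α A).ennreal_toReal.aestronglyMeasurable)]
    _ = _ := by
        congr 1
        refine lintegral_congr fun x => ?_
        rw [ENNReal.ofReal_toReal (hbd x)]

lemma energy_compare {α : ℝ} (hα0 : 0 < α) (hα2 : α < 2)
    (E F : Set X2) (hE : MeasurableSet E) (hF : MeasurableSet F)
    (hEfin : volume E ≠ ⊤) (hvol : volume F = volume E) :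
    (∫ x in F, ∫ y in F, ‖x - y‖ ^ (-α)) - ∫ x in E, ∫ y in E, ‖x - y‖ ^ (-α)
      ≤ 2 * (2 * (volume (ball (0 : X2) 1)).toReal ^ (α / 2) / (2 - α)
          * (volume E).toReal ^ (1 - α / 2)) * (volume (E ∆ F)).toReal := by
  set c : ℝ := 2 * (volume (ball (0 : X2) 1)).toReal ^ (α / 2) / (2 - α)
      * (volume E).toReal ^ (1 - α / 2) with hcdef
  have hc : 0 ≤ c := by
    apply mul_nonneg _ (Real.rpow_nonneg ENNReal.toReal_nonneg _)
    apply div_nonneg _ (by linarith)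
    positivity
  set K : X2 → X2 → ℝ≥0∞ := fun x y => ENNReal.ofReal (‖x - y‖ ^ (-α)) with hK
  set C : ℝ≥0∞ := ENNReal.ofReal c with hCdef
  have hFfin : volume F ≠ ⊤ := by rw [hvol]; exact hEfin
  have hbdE : ∀ x, ∫⁻ y in E, K x y ≤ C := fun x => riesz_bound hα0 hα2 E hEfin x
  have hbdF : ∀ x, ∫⁻ y in F, K x y ≤ C := by
    intro x
    have := riesz_bound hα0 hα2 F hFfin x
    rwa [hvol] at this
  -- symmetry of the kernel
  have hsym : ∀ x y : X2, K x y = K y x := fun x y => by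
    simp only [hK, norm_sub_rev]
  -- splitting of the double integral
  have hsplit : ∫⁻ x in F, ∫⁻ y in F, K x y
      ≤ (∫⁻ x in E, ∫⁻ y in E, K x y) + 2 * C * volume (E ∆ F) := by
    have houter : ∫⁻ x in F, ∫⁻ y in F, K x y
        = (∫⁻ x in F ∩ E, ∫⁻ y in F, K x y) + ∫⁻ x in F \ E, ∫⁻ y in F, K x y :=
      (lintegral_inter_add_diff _ _ hE).symm
    have hinner : ∫⁻ x in F ∩ E, ∫⁻ y in F, K x y
        = (∫⁻ x in F ∩ E, ∫⁻ y in F ∩ E, K x y) + ∫⁻ x in F ∩ E, ∫⁻ y in F \ E, K x y := by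
      rw [← lintegral_add_left (inner_meas α (F ∩ E))]
      refine lintegral_congr fun x => ?_
      exact (lintegral_inter_add_diff _ _ hE).symm
    have hterm1 : ∫⁻ x in F ∩ E, ∫⁻ y in F ∩ E, K x y ≤ ∫⁻ x in E, ∫⁻ y in E, K x y := by
      refine le_trans (lintegral_mono fun x => lintegral_mono_set inter_subset_right) ?_
      exact lintegral_mono_set inter_subset_right
    have hterm2 : ∫⁻ x in F ∩ E, ∫⁻ y in F \ E, K x y ≤ C * volume (F \ E) := by
      have hswap : ∫⁻ x in F ∩ E, ∫⁻ y in F \ E, K x y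
          = ∫⁻ y in F \ E, ∫⁻ x in F ∩ E, K x y := by
        exact lintegral_lintegral_swap ((kern_meas α).aemeasurable)
      rw [hswap]
      calc (∫⁻ y in F \ E, ∫⁻ x in F ∩ E, K x y)
          ≤ ∫⁻ _ in F \ E, C := by
            refine lintegral_mono fun y => ?_
            refine le_trans (lintegral_mono_set inter_subset_right) ?_
            calc (∫⁻ x in E, K x y) = ∫⁻ x in E, K y x :=
                lintegral_congr fun x => hsym x y
              _ ≤ C := hbdE y
        _ = C * volume (F \ E) := by rw [setLIntegral_const]
    have hterm3 : ∫⁻ x in F \ E, ∫⁻ y in F, K x y ≤ C * volume (F \ E) := by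
      calc (∫⁻ x in F \ E, ∫⁻ y in F, K x y) ≤ ∫⁻ _ in F \ E, C :=
            lintegral_mono fun x => hbdF x
        _ = C * volume (F \ E) := by rw [setLIntegral_const]
    have hFE : volume (F \ E) ≤ volume (E ∆ F) :=
      measure_mono (fun x hx => Or.inr hx)
    calc (∫⁻ x in F, ∫⁻ y in F, K x y)
        = (∫⁻ x in F ∩ E, ∫⁻ y in F ∩ E, K x y) + (∫⁻ x in F ∩ E, ∫⁻ y in F \ E, K x y)
          + ∫⁻ x in F \ E, ∫⁻ y in F, K x y := by rw [houter, hinner]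
      _ ≤ (∫⁻ x in E, ∫⁻ y in E, K x y) + C * volume (F \ E) + C * volume (F \ E) := by
          gcongr
      _ ≤ (∫⁻ x in E, ∫⁻ y in E, K x y) + 2 * C * volume (E ∆ F) := by
          rw [add_assoc]
          gcongr
          rw [two_mul, add_mul]
          gcongr <;> exact mul_le_mul_left' hFE C
  -- finiteness
  have hWE_fin : (∫⁻ x in E, ∫⁻ y in E, K x y) ≠ ⊤ := by
    have h1 : (∫⁻ x in E, ∫⁻ y in E, K x y) ≤ C * volume E := by
      refine le_trans (lintegral_mono fun x => hbdE x) ?_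
      rw [setLIntegral_const]
    exact ne_top_of_le_ne_top (ENNReal.mul_ne_top ENNReal.ofReal_ne_top hEfin) h1
  have hΔfin : volume (E ∆ F) ≠ ⊤ := by
    refine ne_top_of_le_ne_top (ENNReal.add_ne_top.mpr ⟨hEfin, hFfin⟩) ?_
    exact le_trans (measure_mono symmDiff_subset_union) (measure_union_le _ _)
  have hbdE' : ∀ x, ∫⁻ y in E, K x y ≠ ⊤ :=
    fun x => ne_top_of_le_ne_top ENNReal.ofReal_ne_top (hbdE x)
  have hbdF' : ∀ x, ∫⁻ y in F, K x y ≠ ⊤ :=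
    fun x => ne_top_of_le_ne_top ENNReal.ofReal_ne_top (hbdF x)
  rw [double_eq α E hbdE', double_eq α F hbdF', sub_le_iff_le_add]
  have hfin2 : 2 * C * volume (E ∆ F) ≠ ⊤ :=
    ENNReal.mul_ne_top (ENNReal.mul_ne_top (by simp) ENNReal.ofReal_ne_top) hΔfin
  have h2 := ENNReal.toReal_mono (ENNReal.add_ne_top.mpr ⟨hWE_fin, hfin2⟩) hsplit
  rw [ENNReal.toReal_add hWE_fin hfin2, hCdef, ENNReal.toReal_mul, ENNReal.toReal_mul,
    ENNReal.toReal_ofReal hc, ENNReal.toReal_ofNat] at h2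
  simp only [hK] at h2
  linarith

/-- A local minimizer `E` of `E_γ = P_ψ + γ V` in the plane (among sets of the same
measure within `L¹`-distance `δ₀` of `E`, up to translation) is an `ω`-minimizer of the
anisotropic perimeter `P_ψ` with
`ω = max (2 c_{α,2} γ |E|^{1-α/2}) (P_ψ(E)/δ₀)`, where `c_{α,2} = 2|B₁|^{α/2}/(2-α)`:
for every `F` with `|F| = |E|`, `P_ψ(E) ≤ P_ψ(F) + ω |E Δ F|`. -/
theorem local_minimizer_is_omega_minimizer
    (α γ δ₀ : ℝ) (hα0 : 0 < α) (hα2 : α < 2) (hγ : 0 < γ) (hδ₀ : 0 < δ₀)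
    (Pψ : Set (EuclideanSpace ℝ (Fin 2)) → ℝ) (hPψnn : ∀ A, 0 ≤ Pψ A)
    (E : Set (EuclideanSpace ℝ (Fin 2))) (hE : MeasurableSet E) (hEfin : volume E < ⊤)
    (hmin : ∀ F : Set (EuclideanSpace ℝ (Fin 2)), MeasurableSet F →
      volume F = volume E →
      (∃ y : EuclideanSpace ℝ (Fin 2), (volume ((y +ᵥ E) ∆ F)).toReal < δ₀) →
      Pψ E + γ * (∫ x in E, ∫ y in E, ‖x - y‖ ^ (-α)) ≤
        Pψ F + γ * ∫ x in F, ∫ y in F, ‖x - y‖ ^ (-α)) :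
    ∀ F : Set (EuclideanSpace ℝ (Fin 2)), MeasurableSet F → volume F = volume E →
      Pψ E ≤ Pψ F +
        max (2 * (2 * (volume (ball (0 : EuclideanSpace ℝ (Fin 2)) 1)).toReal ^ (α / 2)
              / (2 - α)) * γ * (volume E).toReal ^ (1 - α / 2))
          (Pψ E / δ₀) * (volume (E ∆ F)).toReal := by
  intro F hF hvol
  set ω₁ : ℝ := 2 * (2 * (volume (ball (0 : EuclideanSpace ℝ (Fin 2)) 1)).toReal ^ (α / 2)
      / (2 - α)) * γ * (volume E).toReal ^ (1 - α / 2) with hω₁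
  set d : ℝ := (volume (E ∆ F)).toReal with hddef
  have hd0 : 0 ≤ d := ENNReal.toReal_nonneg
  by_cases hcase : d < δ₀
  · have h := hmin F hF hvol ⟨0, by rwa [zero_vadd]⟩
    have hen := energy_compare hα0 hα2 E F hE hF hEfin.ne hvol
    have hmul := mul_le_mul_of_nonneg_left hen hγ.le
    have hmax := mul_le_mul_of_nonneg_right (le_max_left ω₁ (Pψ E / δ₀)) hd0
    rw [hω₁] at hmax
    rw [← hddef] at hmul
    nlinarith [hmul, h, hmax]
  · push_neg at hcase
    have h1 : Pψ E ≤ Pψ E / δ₀ * d := by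
      rw [div_mul_eq_mul_div, le_div_iff₀ hδ₀]
      exact mul_le_mul_of_nonneg_left hcase (hPψnn E)
    have h2 : Pψ E / δ₀ * d ≤ max ω₁ (Pψ E / δ₀) * d :=
      mul_le_mul_of_nonneg_right (le_max_right _ _) hd0
    have h3 := hPψnn F
    rw [hω₁] at h2
    linarith
end
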